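/- arXiv:2109.10202 — 12 statements merged into one kernel-verified Lean document; each statement's English description precedes it below -/
import Mathlib

section
/- Let k be a field, let g be a Lie algebra over k, let U be a k-vector space, let (ρ,V) be a representation of g, and let J̃ be a 3-cocycle of (ρ,V) on g. Define L₀ := g ⊕ U, L₁ := V ⊕ U, d(v⊕u) := 0⊕u ∈ L₀, the bracket [x⊕a, y⊕b] := [x,y]_g ⊕ 0 on L₀×L₀ and [x⊕a, v⊕u] := ρ(x)(v) ⊕ 0 on L₀×L₁, and J(x₁⊕a₁, x₂⊕a₂, x₃⊕a₃) := J̃(x₁,x₂,x₃) ⊕ 0. Then (L₀⊕L₁, d, [·,·], J) is a 2-term L∞-algebra (this 2-term L∞-algebra is denoted L^{g,U,ρ,J̃}). -/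
open Function

/-- The data `(d, b0, b1, J)` on the graded vector space `L0 ⊕ L1` forms a 2-term
L∞-algebra.  Here `b0` is the bracket `L0 × L0 → L0`, `b1` is the bracket
`L0 × L1 → L1` (with the convention `[v,x] := -[x,v] = - b1 x v` for `v : L1`, `x : L0`),
and `J` is the Jacobiator. -/
structure IsTwoTerm (k : Type*) [Field k]
    (L0 : Type*) [AddCommGroup L0] [Module k L0]
    (L1 : Type*) [AddCommGroup L1] [Module k L1]
    (d : L1 → L0) (b0 : L0 → L0 → L0) (b1 : L0 → L1 → L1)
    (J : L0 → L0 → L0 → L1) : Prop where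
  d_lin : IsLinearMap k d
  b0_lin_left : ∀ y, IsLinearMap k fun x => b0 x y
  b0_lin_right : ∀ x, IsLinearMap k fun y => b0 x y
  b0_antisymm : ∀ x y, b0 x y = - b0 y x
  b1_lin_left : ∀ v, IsLinearMap k fun x => b1 x v
  b1_lin_right : ∀ x, IsLinearMap k fun v => b1 x v
  J_lin₁ : ∀ y z, IsLinearMap k fun x => J x y z
  J_lin₂ : ∀ x z, IsLinearMap k fun y => J x y z
  J_lin₃ : ∀ x y, IsLinearMap k fun z => J x y z
  J_alt₁ : ∀ x z, J x x z = 0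
  J_alt₂ : ∀ x y, J x y y = 0
  ident₁ : ∀ x v, d (b1 x v) = b0 x (d v)
  ident₂ : ∀ u v, b1 (d u) v = - b1 (d v) u
  ident₃ : ∀ x y z, d (J x y z) = b0 x (b0 y z) - b0 (b0 x y) z - b0 y (b0 x z)
  ident₄ : ∀ v y z, J (d v) y z = - b1 (b0 y z) v - b1 z (b1 y v) + b1 y (b1 z v)
  ident₅ : ∀ x₁ x₂ x₃ x₄,
    b1 x₁ (J x₂ x₃ x₄) - b1 x₂ (J x₁ x₃ x₄) + b1 x₃ (J x₁ x₂ x₄) - b1 x₄ (J x₁ x₂ x₃)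
      - (J (b0 x₁ x₂) x₃ x₄ - J (b0 x₁ x₃) x₂ x₄ + J (b0 x₁ x₄) x₂ x₃
        + J (b0 x₂ x₃) x₁ x₄ - J (b0 x₂ x₄) x₁ x₃ + J (b0 x₃ x₄) x₁ x₂) = 0

/-- `(φ0, φ1, Φ)` is a morphism of 2-term L∞-algebras from `(L0 ⊕ L1, d, b0, b1, J)`
to `(M0 ⊕ M1, d', b0', b1', J')`.  `Φ` is a linear map on `L0 ∧ L0`, encoded as an
antisymmetric bilinear map. -/
structure IsMorphism (k : Type*) [Field k]
    (L0 : Type*) [AddCommGroup L0] [Module k L0]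
    (L1 : Type*) [AddCommGroup L1] [Module k L1]
    (M0 : Type*) [AddCommGroup M0] [Module k M0]
    (M1 : Type*) [AddCommGroup M1] [Module k M1]
    (d : L1 → L0) (b0 : L0 → L0 → L0) (b1 : L0 → L1 → L1) (J : L0 → L0 → L0 → L1)
    (d' : M1 → M0) (b0' : M0 → M0 → M0) (b1' : M0 → M1 → M1) (J' : M0 → M0 → M0 → M1)
    (φ0 : L0 → M0) (φ1 : L1 → M1) (Φ : L0 → L0 → M1) : Prop where
  φ0_lin : IsLinearMap k φ0
  φ1_lin : IsLinearMap k φ1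
  Φ_lin_left : ∀ y, IsLinearMap k fun x => Φ x y
  Φ_lin_right : ∀ x, IsLinearMap k fun y => Φ x y
  Φ_alt : ∀ x, Φ x x = 0
  compat_d : ∀ v, φ0 (d v) = d' (φ1 v)
  compat_b0 : ∀ x y, d' (Φ x y) = φ0 (b0 x y) - b0' (φ0 x) (φ0 y)
  compat_b1 : ∀ v y, Φ (d v) y = - φ1 (b1 y v) + b1' (φ0 y) (φ1 v)
  compat_J : ∀ x₁ x₂ x₃,
    φ1 (J x₁ x₂ x₃) - J' (φ0 x₁) (φ0 x₂) (φ0 x₃)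
      = b1' (φ0 x₁) (Φ x₂ x₃) - b1' (φ0 x₂) (Φ x₁ x₃) + b1' (φ0 x₃) (Φ x₁ x₂)
        + Φ x₁ (b0 x₂ x₃) - Φ x₂ (b0 x₁ x₃) + Φ x₃ (b0 x₁ x₂)

/-- Lemma 6 of the paper: given a Lie algebra `g`, a vector space `U`,
a representation `(ρ, V)` of `g` and a 3-cocycle `Jt` of `(ρ,V)` on `g`, the data
`L0 = g ⊕ U`, `L1 = V ⊕ U`, `d(v⊕u) = 0⊕u`, `[x⊕a, y⊕b] = [x,y]_g ⊕ 0`,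
`[x⊕a, v⊕u] = ρ(x)(v) ⊕ 0`, `J(x₁⊕a₁,x₂⊕a₂,x₃⊕a₃) = Jt(x₁,x₂,x₃) ⊕ 0` is a
2-term L∞-algebra `L^{g,U,ρ,Jt}`. -/
theorem stmt0 (k : Type*) [Field k]
    (g : Type*) [LieRing g] [LieAlgebra k g]
    (U : Type*) [AddCommGroup U] [Module k U]
    (V : Type*) [AddCommGroup V] [Module k V]
    (ρ : g → V → V)
    (hρ_lin_left : ∀ v, IsLinearMap k fun x => ρ x v)
    (hρ_lin_right : ∀ x, IsLinearMap k fun v => ρ x v)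
    (hρ_bracket : ∀ x y v, ρ ⁅x, y⁆ v = ρ x (ρ y v) - ρ y (ρ x v))
    (Jt : g → g → g → V)
    (hJt_lin₁ : ∀ y z, IsLinearMap k fun x => Jt x y z)
    (hJt_lin₂ : ∀ x z, IsLinearMap k fun y => Jt x y z)
    (hJt_lin₃ : ∀ x y, IsLinearMap k fun z => Jt x y z)
    (hJt_alt₁ : ∀ x z, Jt x x z = 0)
    (hJt_alt₂ : ∀ x y, Jt x y y = 0)
    (hJt_cocycle : ∀ x₁ x₂ x₃ x₄,
      ρ x₁ (Jt x₂ x₃ x₄) - ρ x₂ (Jt x₁ x₃ x₄) + ρ x₃ (Jt x₁ x₂ x₄) - ρ x₄ (Jt x₁ x₂ x₃)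
        - (Jt ⁅x₁, x₂⁆ x₃ x₄ - Jt ⁅x₁, x₃⁆ x₂ x₄ + Jt ⁅x₁, x₄⁆ x₂ x₃
          + Jt ⁅x₂, x₃⁆ x₁ x₄ - Jt ⁅x₂, x₄⁆ x₁ x₃ + Jt ⁅x₃, x₄⁆ x₁ x₂) = 0) :
    IsTwoTerm k (g × U) (V × U)
      (fun w => ((0 : g), w.2))
      (fun x y => (⁅x.1, y.1⁆, (0 : U)))
      (fun x v => (ρ x.1 v.1, (0 : U)))
      (fun x y z => (Jt x.1 y.1 z.1, (0 : U))) := by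
  have hρ0 : ∀ v, ρ 0 v = 0 := fun v => (hρ_lin_left v).map_zero
  have hJt0₁ : ∀ y z, Jt 0 y z = 0 := fun y z => (hJt_lin₁ y z).map_zero
  constructor
  · exact ⟨fun a b => by simp [Prod.ext_iff], fun c a => by simp [Prod.ext_iff]⟩
  · exact fun y => ⟨fun a b => by simp [Prod.ext_iff], fun c a => by simp [Prod.ext_iff]⟩
  · exact fun x => ⟨fun a b => by simp [Prod.ext_iff], fun c a => by simp [Prod.ext_iff]⟩
  · intro x y; rw [Prod.neg_mk, neg_zero, ← lie_skew]
  · exact fun v => ⟨fun a b => by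
      simp [Prod.ext_iff, (hρ_lin_left v.1).map_add], fun c a => by
      simp [Prod.ext_iff, (hρ_lin_left v.1).map_smul]⟩
  · exact fun x => ⟨fun a b => by
      simp [Prod.ext_iff, (hρ_lin_right x.1).map_add], fun c a => by
      simp [Prod.ext_iff, (hρ_lin_right x.1).map_smul]⟩
  · exact fun y z => ⟨fun a b => by
      simp [Prod.ext_iff, (hJt_lin₁ y.1 z.1).map_add], fun c a => by
      simp [Prod.ext_iff, (hJt_lin₁ y.1 z.1).map_smul]⟩
  · exact fun x z => ⟨fun a b => by
      simp [Prod.ext_iff, (hJt_lin₂ x.1 z.1).map_add], fun c a => by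
      simp [Prod.ext_iff, (hJt_lin₂ x.1 z.1).map_smul]⟩
  · exact fun x y => ⟨fun a b => by
      simp [Prod.ext_iff, (hJt_lin₃ x.1 y.1).map_add], fun c a => by
      simp [Prod.ext_iff, (hJt_lin₃ x.1 y.1).map_smul]⟩
  · intro x z; simp [Prod.ext_iff, hJt_alt₁]
  · intro x y; simp [Prod.ext_iff, hJt_alt₂]
  · intro x v; simp [Prod.ext_iff]
  · intro u v; simp [Prod.ext_iff, hρ0]
  · intro x y z
    simp only [Prod.mk_sub_mk, sub_zero, Prod.mk.injEq]
    refine ⟨?_, trivial⟩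
    rw [leibniz_lie]; abel
  · intro v y z
    simp only [Prod.mk_sub_mk, Prod.neg_mk, Prod.mk_add_mk, Prod.ext_iff, hJt0₁, hρ_bracket]
    constructor
    · abel
    · simp
  · intro x₁ x₂ x₃ x₄
    have := hJt_cocycle x₁.1 x₂.1 x₃.1 x₄.1
    simp only [Prod.ext_iff, Prod.mk_sub_mk, Prod.mk_add_mk, Prod.mk.injEq]
    constructor
    · exact this
    · simp
end

section
/- Let (L₀⊕L₁, d, [·,·], J) be a 2-term L∞-algebra over a field k and let g ⊆ L₀ be a subspace with L₀ = g ⊕ im(d) (internal direct sum). Let p_g : L₀ → g be the projection along im(d). Then the antisymmetric bilinear bracket [y,z]_g := p_g([y,z]) on g satisfies the Jacobi identity [x,[y,z]_g]_g = [[x,y]_g,z]_g + [y,[x,z]_g]_g for all x,y,z ∈ g, so (g, [·,·]_g) is a Lie algebra. -/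
open Function

/-- Lemma 8.1 of the paper: if `L0 = g ⊕ im(d)` (internal direct sum,
`I` being the image of `d`) and `p` is the projection of `L0` onto `g` along `im(d)`,
then `[y,z]_g := p [y,z]` satisfies the Jacobi identity on `g`, so `(g, [·,·]_g)` is a
Lie algebra. -/
theorem stmt1 (k : Type*) [Field k]
    (L0 : Type*) [AddCommGroup L0] [Module k L0]
    (L1 : Type*) [AddCommGroup L1] [Module k L1]
    (d : L1 → L0) (b0 : L0 → L0 → L0) (b1 : L0 → L1 → L1) (J : L0 → L0 → L0 → L1)
    (hL : IsTwoTerm k L0 L1 d b0 b1 J)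
    (g : Submodule k L0) (I : Submodule k L0)
    (hI : ∀ x, x ∈ I ↔ ∃ v, d v = x)
    (hcompl : IsCompl g I)
    (p : L0 → L0)
    (hp_mem : ∀ x, p x ∈ g)
    (hp_diff : ∀ x, x - p x ∈ I) :
    ∀ x ∈ g, ∀ y ∈ g, ∀ z ∈ g,
      p (b0 x (p (b0 y z))) = p (b0 (p (b0 x y)) z) + p (b0 y (p (b0 x z))) := by
  -- elements of g ∩ I are zero
  have hker : ∀ u, u ∈ g → u ∈ I → u = 0 := by
    intro u h1 h2
    have hu : u ∈ g ⊓ I := ⟨h1, h2⟩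
    rwa [hcompl.inf_eq_bot, Submodule.mem_bot] at hu
  -- p vanishes on I
  have hpI : ∀ a, a ∈ I → p a = 0 := by
    intro a ha
    refine hker _ (hp_mem a) ?_
    have : p a = a - (a - p a) := by abel
    rw [this]; exact I.sub_mem ha (hp_diff a)
  -- p is additive on subtraction
  have hpsub : ∀ a b, p (a - b) = p a - p b := by
    intro a b
    have h1 : p (a - b) - (p a - p b) ∈ g :=
      g.sub_mem (hp_mem _) (g.sub_mem (hp_mem _) (hp_mem _))
    have h2 : p (a - b) - (p a - p b) ∈ I := by
      have h := I.sub_mem (I.sub_mem (hp_diff a) (hp_diff b)) (hp_diff (a - b))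
      have heq : a - p a - (b - p b) - (a - b - p (a - b))
          = p (a - b) - (p a - p b) := by abel
      rwa [heq] at h
    exact sub_eq_zero.mp (hker _ h1 h2)
  intro x _ y _ z _
  -- inner projections differ from the raw brackets by elements of I
  obtain ⟨v, hv⟩ := (hI (b0 y z - p (b0 y z))).mp (hp_diff (b0 y z))
  obtain ⟨w, hw⟩ := (hI (b0 x y - p (b0 x y))).mp (hp_diff (b0 x y))
  obtain ⟨u, hu⟩ := (hI (b0 x z - p (b0 x z))).mp (hp_diff (b0 x z))
  have hdI : ∀ t, d t ∈ I := fun t => (hI (d t)).mpr ⟨t, rfl⟩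
  have hpv : p (b0 y z) = b0 y z - d v := by rw [hv]; abel
  have hpw : p (b0 x y) = b0 x y - d w := by rw [hw]; abel
  have hpu : p (b0 x z) = b0 x z - d u := by rw [hu]; abel
  -- first term
  have e1 : p (b0 x (p (b0 y z))) = p (b0 x (b0 y z)) := by
    rw [hpv, (hL.b0_lin_right x).map_sub, hpsub, ← hL.ident₁ x v, hpI _ (hdI (b1 x v)),
      sub_zero]
  -- third term
  have e3 : p (b0 y (p (b0 x z))) = p (b0 y (b0 x z)) := by
    rw [hpu, (hL.b0_lin_right y).map_sub, hpsub, ← hL.ident₁ y u, hpI _ (hdI (b1 y u)),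
      sub_zero]
  -- second term
  have e2 : p (b0 (p (b0 x y)) z) = p (b0 (b0 x y) z) := by
    rw [hpw, (hL.b0_lin_left z).map_sub, hpsub]
    have : b0 (d w) z = -(d (b1 z w)) := by
      rw [hL.b0_antisymm, hL.ident₁ z w]
    rw [this]
    have : p (-(d (b1 z w))) = 0 := hpI _ (I.neg_mem (hdI (b1 z w)))
    rw [this, sub_zero]
  rw [e1, e2, e3]
  -- Jacobi up to I via ident₃
  have hJ : b0 x (b0 y z) - (b0 (b0 x y) z + b0 y (b0 x z)) ∈ I := by
    have : b0 x (b0 y z) - (b0 (b0 x y) z + b0 y (b0 x z))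
        = b0 x (b0 y z) - b0 (b0 x y) z - b0 y (b0 x z) := by abel
    rw [this, ← hL.ident₃ x y z]
    exact hdI _
  have := hpsub (b0 x (b0 y z)) (b0 (b0 x y) z + b0 y (b0 x z))
  rw [hpI _ hJ] at this
  have h4 : p (b0 x (b0 y z)) = p (b0 (b0 x y) z + b0 y (b0 x z)) :=
    sub_eq_zero.mp this.symm
  rw [h4]
  -- p additive
  have : b0 (b0 x y) z + b0 y (b0 x z)
      = b0 (b0 x y) z - (0 - b0 y (b0 x z)) := by abel
  rw [this, hpsub, hpsub]
  have hp0 : p 0 = 0 := hpI 0 I.zero_mem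
  rw [hp0]; abel
end

section
/- Let (L₀⊕L₁, d, [·,·], J) be a 2-term L∞-algebra over a field k and let g ⊆ L₀ be a subspace with L₀ = g ⊕ im(d), equipped with the Lie bracket [y,z]_g := p_g([y,z]) where p_g : L₀ → g is the projection along im(d). Then for every x ∈ g and v ∈ ker(d) one has [x,v] ∈ ker(d), and the map ρ : g → End(ker(d)) given by ρ(x)(v) := [x,v] satisfies ρ([y,z]_g) = ρ(y)∘ρ(z) − ρ(z)∘ρ(y) for all y,z ∈ g; that is, (ρ, ker(d)) is a Lie algebra representation of (g, [·,·]_g). -/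
open Function

/-- Lemma 8.2 of the paper: with `L0 = g ⊕ im(d)` and `p` the projection
onto `g` along `im(d)`, the bracket `[x,v] := b1 x v` maps `g × ker(d)` to `ker(d)`, and
`ρ(x)(v) := [x,v]` defines a representation of the Lie algebra `(g, p ∘ [·,·])` on
`ker(d)`:  `ρ([y,z]_g) = ρ(y)∘ρ(z) − ρ(z)∘ρ(y)`. -/
theorem stmt2 (k : Type*) [Field k]
    (L0 : Type*) [AddCommGroup L0] [Module k L0]
    (L1 : Type*) [AddCommGroup L1] [Module k L1]
    (d : L1 → L0) (b0 : L0 → L0 → L0) (b1 : L0 → L1 → L1) (J : L0 → L0 → L0 → L1)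
    (hL : IsTwoTerm k L0 L1 d b0 b1 J)
    (g : Submodule k L0) (I : Submodule k L0)
    (hI : ∀ x, x ∈ I ↔ ∃ v, d v = x)
    (hcompl : IsCompl g I)
    (p : L0 → L0)
    (hp_mem : ∀ x, p x ∈ g)
    (hp_diff : ∀ x, x - p x ∈ I) :
    (∀ x ∈ g, ∀ v : L1, d v = 0 → d (b1 x v) = 0) ∧
      (∀ y ∈ g, ∀ z ∈ g, ∀ v : L1, d v = 0 →
        b1 (p (b0 y z)) v = b1 y (b1 z v) - b1 z (b1 y v)) := by
  constructor
  · intro x _ v hv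
    rw [hL.ident₁, hv, (hL.b0_lin_right x).map_zero]
  · intro y _ z _ v hv
    obtain ⟨u, hu⟩ := (hI _).1 (hp_diff (b0 y z))
    have key : J (d v) y z = - b1 (b0 y z) v - b1 z (b1 y v) + b1 y (b1 z v) :=
      hL.ident₄ v y z
    rw [hv] at key
    have hJ0 : J (0 : L0) y z = 0 := (hL.J_lin₁ y z).map_zero
    have hmain : b1 (b0 y z) v = b1 y (b1 z v) - b1 z (b1 y v) := by
      rw [hJ0] at key; linear_combination (norm := abel) key
    have hdu : b1 (d u) v = 0 := by
      rw [hL.ident₂, hv, (hL.b1_lin_left u).map_zero, neg_zero]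
    have : b1 (b0 y z) v = b1 (p (b0 y z)) v + b1 (d u) v := by
      rw [← (hL.b1_lin_left v).map_add]
      congr 1
      rw [hu]; abel
    rw [hmain, hdu, add_zero] at this
    exact this.symm
end

section
/- Let (L₀⊕L₁, d, [·,·], J) be a 2-term L∞-algebra over a field k with fixed decompositions L₀ = g ⊕ im(d) and L₁ = ker(d) ⊕ U. Let p_g : L₀ → g and p_{im d} : L₀ → im(d) be the projections associated to the first decomposition, and p_{ker d} : L₁ → ker(d) the projection associated to the second. The restriction d|_U : U → im(d) is a linear isomorphism; define h : L₀ → U by h(x) := (d|_U)⁻¹(p_{im d}(x)). Equip g with the Lie bracket [y,z]_g := p_g([y,z]) and ker(d) with the representation ρ(x)(v) := [x,v]. Then the alternating trilinear map J̃ : g×g×g → ker(d) defined by J̃(x₁,x₂,x₃) := p_{ker d}(J(x₁,x₂,x₃)) − ∑_{σ∈sh(1,2)} sgn(σ) p_{ker d}([x_{σ(1)}, h([x_{σ(2)},x_{σ(3)}])]) is a 3-cocycle of the representation (ρ, ker(d)) on (g,[·,·]_g), i.e. δJ̃ = 0. -/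
open Function

/-- Lemma 8.3 of the paper: with decompositions `L0 = g ⊕ im(d)`
(projection `p` onto `g`) and `L1 = ker(d) ⊕ U` (projection `q` onto `ker(d)`), and
`h : L0 → U` the map `h(x) = (d|_U)⁻¹(p_{im d}(x))` (characterized by `h x ∈ U` and
`d (h x) = x - p x`), the map
`J̃(x₁,x₂,x₃) := q(J(x₁,x₂,x₃)) − ∑_{σ∈sh(1,2)} sgn(σ) q([x_{σ1}, h([x_{σ2},x_{σ3}])])`
takes values in `ker(d)` and is a 3-cocycle of the representation `ρ(x)v := [x,v]` of
`(g, p∘[·,·])` on `ker(d)`, i.e. `δ J̃ = 0` on `g`. -/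
theorem stmt3 (k : Type*) [Field k]
    (L0 : Type*) [AddCommGroup L0] [Module k L0]
    (L1 : Type*) [AddCommGroup L1] [Module k L1]
    (d : L1 → L0) (b0 : L0 → L0 → L0) (b1 : L0 → L1 → L1) (J : L0 → L0 → L0 → L1)
    (hL : IsTwoTerm k L0 L1 d b0 b1 J)
    (g : Submodule k L0) (I : Submodule k L0)
    (hI : ∀ x, x ∈ I ↔ ∃ v, d v = x)
    (hcompl0 : IsCompl g I)
    (p : L0 → L0)
    (hp_mem : ∀ x, p x ∈ g)
    (hp_diff : ∀ x, x - p x ∈ I)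
    (K : Submodule k L1) (U : Submodule k L1)
    (hK : ∀ v, v ∈ K ↔ d v = 0)
    (hcompl1 : IsCompl K U)
    (q : L1 → L1)
    (hq_mem : ∀ w, q w ∈ K)
    (hq_diff : ∀ w, w - q w ∈ U)
    (h : L0 → L1)
    (hh_mem : ∀ x, h x ∈ U)
    (hh_d : ∀ x, d (h x) = x - p x) :
    (∀ x₁ x₂ x₃ : L0,
      d (q (J x₁ x₂ x₃) - q (b1 x₁ (h (b0 x₂ x₃))) + q (b1 x₂ (h (b0 x₁ x₃)))
          - q (b1 x₃ (h (b0 x₁ x₂)))) = 0) ∧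
    ∀ x₁ ∈ g, ∀ x₂ ∈ g, ∀ x₃ ∈ g, ∀ x₄ ∈ g,
      (let Jt : L0 → L0 → L0 → L1 := fun y₁ y₂ y₃ =>
        q (J y₁ y₂ y₃) - q (b1 y₁ (h (b0 y₂ y₃))) + q (b1 y₂ (h (b0 y₁ y₃)))
          - q (b1 y₃ (h (b0 y₁ y₂)))
      b1 x₁ (Jt x₂ x₃ x₄) - b1 x₂ (Jt x₁ x₃ x₄) + b1 x₃ (Jt x₁ x₂ x₄) - b1 x₄ (Jt x₁ x₂ x₃)
        - (Jt (p (b0 x₁ x₂)) x₃ x₄ - Jt (p (b0 x₁ x₃)) x₂ x₄ + Jt (p (b0 x₁ x₄)) x₂ x₃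
          + Jt (p (b0 x₂ x₃)) x₁ x₄ - Jt (p (b0 x₂ x₄)) x₁ x₃
          + Jt (p (b0 x₃ x₄)) x₁ x₂) = 0) := by
  constructor
  · intro x₁ x₂ x₃
    have hdq : ∀ w, d (q w) = 0 := fun w => (hK _).mp (hq_mem w)
    have dsub : ∀ u v : L1, d (u - v) = d u - d v := fun u v => hL.d_lin.map_sub u v
    have dadd : ∀ u v : L1, d (u + v) = d u + d v := fun u v => hL.d_lin.map_add u v
    rw [dsub, dadd, dsub, hdq, hdq, hdq, hdq]
    simp
  · intro x₁ _hx₁ x₂ _hx₂ x₃ _hx₃ x₄ _hx₄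
    have dsub : ∀ u v : L1, d (u - v) = d u - d v := fun u v => hL.d_lin.map_sub u v
    have dadd : ∀ u v : L1, d (u + v) = d u + d v := fun u v => hL.d_lin.map_add u v
    have hdq : ∀ w, d (q w) = 0 := fun w => (hK _).mp (hq_mem w)
    have b0zero : ∀ x : L0, b0 x (0 : L0) = 0 := fun x => (hL.b0_lin_right x).map_zero
    have b0rsub : ∀ (x u v : L0), b0 x (u - v) = b0 x u - b0 x v := fun x u v => (hL.b0_lin_right x).map_sub u v
    have b1sub : ∀ (x : L0) (u v : L1), b1 x (u - v) = b1 x u - b1 x v := fun x u v => (hL.b1_lin_right x).map_sub u v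
    have b1add : ∀ (x : L0) (u v : L1), b1 x (u + v) = b1 x u + b1 x v := fun x u v => (hL.b1_lin_right x).map_add u v
    have b1neg : ∀ (x : L0) (v : L1), b1 x (-v) = - b1 x v := fun x v => (hL.b1_lin_right x).map_neg v
    have b1lsub : ∀ (a b : L0) (v : L1), b1 (a - b) v = b1 a v - b1 b v := fun a b v => (hL.b1_lin_left v).map_sub a b
    have Jlsub : ∀ (a b y z : L0), J (a - b) y z = J a y z - J b y z := fun a b y z => (hL.J_lin₁ y z).map_sub a b
    have gI0 : ∀ x, x ∈ g → x ∈ I → x = 0 := fun x h1 h2 => Submodule.disjoint_def.mp hcompl0.disjoint x h1 h2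
    have KU0 : ∀ v, v ∈ K → v ∈ U → v = 0 := fun v h1 h2 => Submodule.disjoint_def.mp hcompl1.disjoint v h1 h2
    have pdv0 : ∀ v, p (d v) = 0 := by
      intro v
      refine gI0 _ (hp_mem _) ?_
      have e : p (d v) = d v - (d v - p (d v)) := by abel
      rw [e]
      exact Submodule.sub_mem _ ((hI _).mpr ⟨v, rfl⟩) (hp_diff _)
    have hqv : ∀ v, q v = v - h (d v) := by
      intro v
      have w0 : (v - q v) - h (d v) = 0 := by
        refine KU0 _ ((hK _).mpr ?_) (Submodule.sub_mem _ (hq_diff v) (hh_mem _))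
        rw [dsub, dsub, hh_d (d v), hdq, pdv0]
        abel
      rw [sub_eq_zero] at w0
      rw [← w0]; abel
    have hpadd : ∀ a b, p (a + b) = p a + p b := by
      intro a b
      refine sub_eq_zero.mp (gI0 _ (Submodule.sub_mem _ (hp_mem _) (Submodule.add_mem _ (hp_mem _) (hp_mem _))) ?_)
      have e : p (a + b) - (p a + p b) = ((a - p a) + (b - p b)) - ((a + b) - p (a + b)) := by abel
      rw [e]
      exact Submodule.sub_mem _ (Submodule.add_mem _ (hp_diff a) (hp_diff b)) (hp_diff _)
    have hpneg : ∀ a, p (-a) = - p a := by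
      intro a
      have w0 : p (-a) + p a = 0 := by
        refine gI0 _ (Submodule.add_mem _ (hp_mem _) (hp_mem _)) ?_
        have e : p (-a) + p a = - ((-a - p (-a)) + (a - p a)) := by abel
        rw [e]
        exact Submodule.neg_mem _ (Submodule.add_mem _ (hp_diff _) (hp_diff _))
      rw [← sub_eq_zero, ← w0]; abel
    have hUinj : ∀ u, u ∈ U → d u = 0 → u = 0 := fun u hu hdu => KU0 u ((hK u).mpr hdu) hu
    have hhadd : ∀ a b, h (a + b) = h a + h b := by
      intro a b
      have w0 : h (a + b) - (h a + h b) = 0 := by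
        refine hUinj _ (Submodule.sub_mem _ (hh_mem _) (Submodule.add_mem _ (hh_mem _) (hh_mem _))) ?_
        rw [dsub, dadd, hh_d, hh_d, hh_d, hpadd]
        abel
      exact sub_eq_zero.mp w0
    have hhneg : ∀ a, h (-a) = - h a := by
      intro a
      have w0 : h (-a) + h a = 0 := by
        refine hUinj _ (Submodule.add_mem _ (hh_mem _) (hh_mem _)) ?_
        rw [dadd, hh_d, hh_d, hpneg]
        abel
      rw [← sub_eq_zero, ← w0]; abel
    have hhsub : ∀ a b, h (a - b) = h a - h b := by
      intro a b; rw [sub_eq_add_neg, hhadd, hhneg, ← sub_eq_add_neg]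
    have hswap : ∀ a b, h (b0 a b) = - h (b0 b a) := by
      intro a b; rw [hL.b0_antisymm a b, hhneg]
    have DT' : ∀ x y z, d (J x y z) - d (b1 x (h (b0 y z))) + d (b1 y (h (b0 x z))) - d (b1 z (h (b0 x y))) = b0 x (p (b0 y z)) - b0 y (p (b0 x z)) + b0 z (p (b0 x y)) := by
      intro x y z
      rw [hL.ident₃]
      simp only [hL.ident₁, hh_d, b0rsub]
      rw [hL.b0_antisymm (b0 x y) z]
      abel
    -- main expansion facts
    have JtEq : ∀ x y z, q (J x y z) - q (b1 x (h (b0 y z))) + q (b1 y (h (b0 x z))) - q (b1 z (h (b0 x y))) = J x y z - b1 x (h (b0 y z)) + b1 y (h (b0 x z)) - b1 z (h (b0 x y)) - h (b0 x (p (b0 y z))) + h (b0 y (p (b0 x z))) - h (b0 z (p (b0 x y))) := by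
      intro x y z
      simp only [hqv]
      have e := congrArg h (DT' x y z).symm
      simp only [hhsub, hhadd] at e
      rw [← sub_eq_zero] at e
      rw [← sub_eq_zero, ← e]
      abel
    have Pexp : ∀ y z (v : L1), b1 (p (b0 y z)) v = b1 (b0 y z) v + b1 (d v) (h (b0 y z)) := by
      intro y z v
      have hp' : p (b0 y z) = b0 y z - d (h (b0 y z)) := by rw [hh_d]; abel
      rw [hp', b1lsub, hL.ident₂ (h (b0 y z)) v]
      abel
    have JP : ∀ y z a b, J (p (b0 y z)) a b = J (b0 y z) a b + b1 (b0 a b) (h (b0 y z)) + b1 b (b1 a (h (b0 y z))) - b1 a (b1 b (h (b0 y z))) := by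
      intro y z a b
      have hp' : p (b0 y z) = b0 y z - d (h (b0 y z)) := by rw [hh_d]; abel
      rw [hp', Jlsub, hL.ident₄]
      abel
    have eA1 : b1 x₁ (q (J x₂ x₃ x₄) - q (b1 x₂ (h (b0 x₃ x₄))) + q (b1 x₃ (h (b0 x₂ x₄))) - q (b1 x₄ (h (b0 x₂ x₃)))) = b1 x₁ (J x₂ x₃ x₄) - b1 x₁ (b1 x₂ (h (b0 x₃ x₄))) + b1 x₁ (b1 x₃ (h (b0 x₂ x₄))) - b1 x₁ (b1 x₄ (h (b0 x₂ x₃))) - b1 x₁ (h (b0 x₂ (p (b0 x₃ x₄)))) + b1 x₁ (h (b0 x₃ (p (b0 x₂ x₄)))) - b1 x₁ (h (b0 x₄ (p (b0 x₂ x₃)))) := by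
      rw [JtEq]; simp only [b1sub, b1add]
    have eA2 : b1 x₂ (q (J x₁ x₃ x₄) - q (b1 x₁ (h (b0 x₃ x₄))) + q (b1 x₃ (h (b0 x₁ x₄))) - q (b1 x₄ (h (b0 x₁ x₃)))) = b1 x₂ (J x₁ x₃ x₄) - b1 x₂ (b1 x₁ (h (b0 x₃ x₄))) + b1 x₂ (b1 x₃ (h (b0 x₁ x₄))) - b1 x₂ (b1 x₄ (h (b0 x₁ x₃))) - b1 x₂ (h (b0 x₁ (p (b0 x₃ x₄)))) + b1 x₂ (h (b0 x₃ (p (b0 x₁ x₄)))) - b1 x₂ (h (b0 x₄ (p (b0 x₁ x₃)))) := by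
      rw [JtEq]; simp only [b1sub, b1add]
    have eA3 : b1 x₃ (q (J x₁ x₂ x₄) - q (b1 x₁ (h (b0 x₂ x₄))) + q (b1 x₂ (h (b0 x₁ x₄))) - q (b1 x₄ (h (b0 x₁ x₂)))) = b1 x₃ (J x₁ x₂ x₄) - b1 x₃ (b1 x₁ (h (b0 x₂ x₄))) + b1 x₃ (b1 x₂ (h (b0 x₁ x₄))) - b1 x₃ (b1 x₄ (h (b0 x₁ x₂))) - b1 x₃ (h (b0 x₁ (p (b0 x₂ x₄)))) + b1 x₃ (h (b0 x₂ (p (b0 x₁ x₄)))) - b1 x₃ (h (b0 x₄ (p (b0 x₁ x₂)))) := by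
      rw [JtEq]; simp only [b1sub, b1add]
    have eA4 : b1 x₄ (q (J x₁ x₂ x₃) - q (b1 x₁ (h (b0 x₂ x₃))) + q (b1 x₂ (h (b0 x₁ x₃))) - q (b1 x₃ (h (b0 x₁ x₂)))) = b1 x₄ (J x₁ x₂ x₃) - b1 x₄ (b1 x₁ (h (b0 x₂ x₃))) + b1 x₄ (b1 x₂ (h (b0 x₁ x₃))) - b1 x₄ (b1 x₃ (h (b0 x₁ x₂))) - b1 x₄ (h (b0 x₁ (p (b0 x₂ x₃)))) + b1 x₄ (h (b0 x₂ (p (b0 x₁ x₃)))) - b1 x₄ (h (b0 x₃ (p (b0 x₁ x₂)))) := by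
      rw [JtEq]; simp only [b1sub, b1add]
    have eC12 : q (J (p (b0 x₁ x₂)) x₃ x₄) - q (b1 (p (b0 x₁ x₂)) (h (b0 x₃ x₄))) + q (b1 x₃ (h (b0 (p (b0 x₁ x₂)) x₄))) - q (b1 x₄ (h (b0 (p (b0 x₁ x₂)) x₃))) = J (b0 x₁ x₂) x₃ x₄ + b1 (b0 x₃ x₄) (h (b0 x₁ x₂)) + b1 x₄ (b1 x₃ (h (b0 x₁ x₂))) - b1 x₃ (b1 x₄ (h (b0 x₁ x₂))) - b1 (b0 x₁ x₂) (h (b0 x₃ x₄)) - b1 (d (h (b0 x₃ x₄))) (h (b0 x₁ x₂)) - b1 x₃ (h (b0 x₄ (p (b0 x₁ x₂)))) + b1 x₄ (h (b0 x₃ (p (b0 x₁ x₂)))) - h (b0 (p (b0 x₁ x₂)) (p (b0 x₃ x₄))) + h (b0 x₃ (p (b0 (p (b0 x₁ x₂)) x₄))) - h (b0 x₄ (p (b0 (p (b0 x₁ x₂)) x₃))) := by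
      rw [JtEq, JP x₁ x₂ x₃ x₄, Pexp x₁ x₂ (h (b0 x₃ x₄)), hswap (p (b0 x₁ x₂)) x₄, hswap (p (b0 x₁ x₂)) x₃]
      simp only [b1sub, b1add, b1neg]
      abel
    have eC13 : q (J (p (b0 x₁ x₃)) x₂ x₄) - q (b1 (p (b0 x₁ x₃)) (h (b0 x₂ x₄))) + q (b1 x₂ (h (b0 (p (b0 x₁ x₃)) x₄))) - q (b1 x₄ (h (b0 (p (b0 x₁ x₃)) x₂))) = J (b0 x₁ x₃) x₂ x₄ + b1 (b0 x₂ x₄) (h (b0 x₁ x₃)) + b1 x₄ (b1 x₂ (h (b0 x₁ x₃))) - b1 x₂ (b1 x₄ (h (b0 x₁ x₃))) - b1 (b0 x₁ x₃) (h (b0 x₂ x₄)) - b1 (d (h (b0 x₂ x₄))) (h (b0 x₁ x₃)) - b1 x₂ (h (b0 x₄ (p (b0 x₁ x₃)))) + b1 x₄ (h (b0 x₂ (p (b0 x₁ x₃)))) - h (b0 (p (b0 x₁ x₃)) (p (b0 x₂ x₄))) + h (b0 x₂ (p (b0 (p (b0 x₁ x₃)) x₄))) - h (b0 x₄ (p (b0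 (p (b0 x₁ x₃)) x₂))) := by
      rw [JtEq, JP x₁ x₃ x₂ x₄, Pexp x₁ x₃ (h (b0 x₂ x₄)), hswap (p (b0 x₁ x₃)) x₄, hswap (p (b0 x₁ x₃)) x₂]
      simp only [b1sub, b1add, b1neg]
      abel
    have eC14 : q (J (p (b0 x₁ x₄)) x₂ x₃) - q (b1 (p (b0 x₁ x₄)) (h (b0 x₂ x₃))) + q (b1 x₂ (h (b0 (p (b0 x₁ x₄)) x₃))) - q (b1 x₃ (h (b0 (p (b0 x₁ x₄)) x₂))) = J (b0 x₁ x₄) x₂ x₃ + b1 (b0 x₂ x₃) (h (b0 x₁ x₄)) + b1 x₃ (b1 x₂ (h (b0 x₁ x₄))) - b1 x₂ (b1 x₃ (h (b0 x₁ x₄))) - b1 (b0 x₁ x₄) (h (b0 x₂ x₃)) - b1 (d (h (b0 x₂ x₃))) (h (b0 x₁ x₄)) - b1 x₂ (h (b0 x₃ (p (b0 x₁ x₄)))) + b1 x₃ (h (b0 x₂ (p (b0 x₁ x₄)))) - h (b0 (p (b0 x₁ x₄)) (p (b0 x₂ x₃))) + h (b0 x₂ (p (b0 (p (b0 x₁ x₄))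 x₃))) - h (b0 x₃ (p (b0 (p (b0 x₁ x₄)) x₂))) := by
      rw [JtEq, JP x₁ x₄ x₂ x₃, Pexp x₁ x₄ (h (b0 x₂ x₃)), hswap (p (b0 x₁ x₄)) x₃, hswap (p (b0 x₁ x₄)) x₂]
      simp only [b1sub, b1add, b1neg]
      abel
    have eC23 : q (J (p (b0 x₂ x₃)) x₁ x₄) - q (b1 (p (b0 x₂ x₃)) (h (b0 x₁ x₄))) + q (b1 x₁ (h (b0 (p (b0 x₂ x₃)) x₄))) - q (b1 x₄ (h (b0 (p (b0 x₂ x₃)) x₁))) = J (b0 x₂ x₃) x₁ x₄ + b1 (b0 x₁ x₄) (h (b0 x₂ x₃)) + b1 x₄ (b1 x₁ (h (b0 x₂ x₃))) - b1 x₁ (b1 x₄ (h (b0 x₂ x₃))) - b1 (b0 x₂ x₃) (h (b0 x₁ x₄)) - b1 (d (h (b0 x₁ x₄))) (h (b0 x₂ x₃)) - b1 x₁ (h (b0 x₄ (p (b0 x₂ x₃)))) + b1 x₄ (h (b0 x₁ (p (b0 x₂ x₃)))) - h (b0 (p (b0 x₂ x₃)) (p (b0 x₁ x₄))) + h (b0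 x₁ (p (b0 (p (b0 x₂ x₃)) x₄))) - h (b0 x₄ (p (b0 (p (b0 x₂ x₃)) x₁))) := by
      rw [JtEq, JP x₂ x₃ x₁ x₄, Pexp x₂ x₃ (h (b0 x₁ x₄)), hswap (p (b0 x₂ x₃)) x₄, hswap (p (b0 x₂ x₃)) x₁]
      simp only [b1sub, b1add, b1neg]
      abel
    have eC24 : q (J (p (b0 x₂ x₄)) x₁ x₃) - q (b1 (p (b0 x₂ x₄)) (h (b0 x₁ x₃))) + q (b1 x₁ (h (b0 (p (b0 x₂ x₄)) x₃))) - q (b1 x₃ (h (b0 (p (b0 x₂ x₄)) x₁))) = J (b0 x₂ x₄) x₁ x₃ + b1 (b0 x₁ x₃) (h (b0 x₂ x₄)) + b1 x₃ (b1 x₁ (h (b0 x₂ x₄))) - b1 x₁ (b1 x₃ (h (b0 x₂ x₄))) - b1 (b0 x₂ x₄) (h (b0 x₁ x₃)) - b1 (d (h (b0 x₁ x₃))) (h (b0 x₂ x₄)) - b1 x₁ (h (b0 x₃ (p (b0 x₂ x₄)))) + b1 x₃ (h (b0 x₁ (p (b0 x₂ x₄)))) - h (b0 (p (b0 x₂ x₄))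 (p (b0 x₁ x₃))) + h (b0 x₁ (p (b0 (p (b0 x₂ x₄)) x₃))) - h (b0 x₃ (p (b0 (p (b0 x₂ x₄)) x₁))) := by
      rw [JtEq, JP x₂ x₄ x₁ x₃, Pexp x₂ x₄ (h (b0 x₁ x₃)), hswap (p (b0 x₂ x₄)) x₃, hswap (p (b0 x₂ x₄)) x₁]
      simp only [b1sub, b1add, b1neg]
      abel
    have eC34 : q (J (p (b0 x₃ x₄)) x₁ x₂) - q (b1 (p (b0 x₃ x₄)) (h (b0 x₁ x₂))) + q (b1 x₁ (h (b0 (p (b0 x₃ x₄)) x₂))) - q (b1 x₂ (h (b0 (p (b0 x₃ x₄)) x₁))) = J (b0 x₃ x₄) x₁ x₂ + b1 (b0 x₁ x₂) (h (b0 x₃ x₄)) + b1 x₂ (b1 x₁ (h (b0 x₃ x₄))) - b1 x₁ (b1 x₂ (h (b0 x₃ x₄))) - b1 (b0 x₃ x₄) (h (b0 x₁ x₂)) - b1 (d (h (b0 x₁ x₂))) (h (b0 x₃ x₄)) - b1 x₁ (h (b0 x₂ (p (b0 x₃ x₄)))) + b1 x₂ (h (b0 x₁ (p (b0 x₃ x₄))))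 - h (b0 (p (b0 x₃ x₄)) (p (b0 x₁ x₂))) + h (b0 x₁ (p (b0 (p (b0 x₃ x₄)) x₂))) - h (b0 x₂ (p (b0 (p (b0 x₃ x₄)) x₁))) := by
      rw [JtEq, JP x₃ x₄ x₁ x₂, Pexp x₃ x₄ (h (b0 x₁ x₂)), hswap (p (b0 x₃ x₄)) x₂, hswap (p (b0 x₃ x₄)) x₁]
      simp only [b1sub, b1add, b1neg]
      abel
    show b1 x₁ (q (J x₂ x₃ x₄) - q (b1 x₂ (h (b0 x₃ x₄))) + q (b1 x₃ (h (b0 x₂ x₄))) - q (b1 x₄ (h (b0 x₂ x₃)))) - b1 x₂ (q (J x₁ x₃ x₄) - q (b1 x₁ (h (b0 x₃ x₄))) + q (b1 x₃ (h (b0 x₁ x₄))) - q (b1 x₄ (h (b0 x₁ x₃)))) + b1 x₃ (q (J x₁ x₂ x₄) - q (b1 x₁ (h (b0 x₂ x₄))) + q (b1 x₂ (h (b0 x₁ x₄))) - q (b1 x₄ (h (b0 x₁ x₂)))) - b1 x₄ (q (J x₁ x₂ x₃) - q (b1 x₁ (h (b0 x₂ x₃))) + q (b1 x₂ (h (b0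 x₁ x₃))) - q (b1 x₃ (h (b0 x₁ x₂))))
        - ((q (J (p (b0 x₁ x₂)) x₃ x₄) - q (b1 (p (b0 x₁ x₂)) (h (b0 x₃ x₄))) + q (b1 x₃ (h (b0 (p (b0 x₁ x₂)) x₄))) - q (b1 x₄ (h (b0 (p (b0 x₁ x₂)) x₃)))) - (q (J (p (b0 x₁ x₃)) x₂ x₄) - q (b1 (p (b0 x₁ x₃)) (h (b0 x₂ x₄))) + q (b1 x₂ (h (b0 (p (b0 x₁ x₃)) x₄))) - q (b1 x₄ (h (b0 (p (b0 x₁ x₃)) x₂)))) + (q (J (p (b0 x₁ x₄)) x₂ x₃) - q (b1 (p (b0 x₁ x₄)) (h (b0 x₂ x₃))) + q (b1 x₂ (h (b0 (p (b0 x₁ x₄)) x₃))) - q (b1 x₃ (h (b0 (p (b0 x₁ x₄)) x₂))))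
          + (q (J (p (b0 x₂ x₃)) x₁ x₄) - q (b1 (p (b0 x₂ x₃)) (h (b0 x₁ x₄))) + q (b1 x₁ (h (b0 (p (b0 x₂ x₃)) x₄))) - q (b1 x₄ (h (b0 (p (b0 x₂ x₃)) x₁)))) - (q (J (p (b0 x₂ x₄)) x₁ x₃) - q (b1 (p (b0 x₂ x₄)) (h (b0 x₁ x₃))) + q (b1 x₁ (h (b0 (p (b0 x₂ x₄)) x₃))) - q (b1 x₃ (h (b0 (p (b0 x₂ x₄)) x₁))))
          + (q (J (p (b0 x₃ x₄)) x₁ x₂) - q (b1 (p (b0 x₃ x₄)) (h (b0 x₁ x₂))) + q (b1 x₁ (h (b0 (p (b0 x₃ x₄)) x₂))) - q (b1 x₂ (h (b0 (p (b0 x₃ x₄)) x₁))))) = 0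
    have hdE : d (b1 x₁ (q (J x₂ x₃ x₄) - q (b1 x₂ (h (b0 x₃ x₄))) + q (b1 x₃ (h (b0 x₂ x₄))) - q (b1 x₄ (h (b0 x₂ x₃)))) - b1 x₂ (q (J x₁ x₃ x₄) - q (b1 x₁ (h (b0 x₃ x₄))) + q (b1 x₃ (h (b0 x₁ x₄))) - q (b1 x₄ (h (b0 x₁ x₃)))) + b1 x₃ (q (J x₁ x₂ x₄) - q (b1 x₁ (h (b0 x₂ x₄))) + q (b1 x₂ (h (b0 x₁ x₄))) - q (b1 x₄ (h (b0 x₁ x₂)))) - b1 x₄ (q (J x₁ x₂ x₃) - q (b1 x₁ (h (b0 x₂ x₃))) + q (b1 x₂ (h (b0 x₁ x₃))) - q (b1 x₃ (h (b0 x₁ x₂))))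
        - ((q (J (p (b0 x₁ x₂)) x₃ x₄) - q (b1 (p (b0 x₁ x₂)) (h (b0 x₃ x₄))) + q (b1 x₃ (h (b0 (p (b0 x₁ x₂)) x₄))) - q (b1 x₄ (h (b0 (p (b0 x₁ x₂)) x₃)))) - (q (J (p (b0 x₁ x₃)) x₂ x₄) - q (b1 (p (b0 x₁ x₃)) (h (b0 x₂ x₄))) + q (b1 x₂ (h (b0 (p (b0 x₁ x₃)) x₄))) - q (b1 x₄ (h (b0 (p (b0 x₁ x₃)) x₂)))) + (q (J (p (b0 x₁ x₄)) x₂ x₃) - q (b1 (p (b0 x₁ x₄)) (h (b0 x₂ x₃))) + q (b1 x₂ (h (b0 (p (b0 x₁ x₄)) x₃))) - q (b1 x₃ (h (b0 (p (b0 x₁ x₄)) x₂))))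
          + (q (J (p (b0 x₂ x₃)) x₁ x₄) - q (b1 (p (b0 x₂ x₃)) (h (b0 x₁ x₄))) + q (b1 x₁ (h (b0 (p (b0 x₂ x₃)) x₄))) - q (b1 x₄ (h (b0 (p (b0 x₂ x₃)) x₁)))) - (q (J (p (b0 x₂ x₄)) x₁ x₃) - q (b1 (p (b0 x₂ x₄)) (h (b0 x₁ x₃))) + q (b1 x₁ (h (b0 (p (b0 x₂ x₄)) x₃))) - q (b1 x₃ (h (b0 (p (b0 x₂ x₄)) x₁))))
          + (q (J (p (b0 x₃ x₄)) x₁ x₂) - q (b1 (p (b0 x₃ x₄)) (h (b0 x₁ x₂))) + q (b1 x₁ (h (b0 (p (b0 x₃ x₄)) x₂))) - q (b1 x₂ (h (b0 (p (b0 x₃ x₄)) x₁)))))) = 0 := by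
      simp only [dsub, dadd, hL.ident₁, hdq]
      simp [b0zero]
    have hER : (b1 x₁ (q (J x₂ x₃ x₄) - q (b1 x₂ (h (b0 x₃ x₄))) + q (b1 x₃ (h (b0 x₂ x₄))) - q (b1 x₄ (h (b0 x₂ x₃)))) - b1 x₂ (q (J x₁ x₃ x₄) - q (b1 x₁ (h (b0 x₃ x₄))) + q (b1 x₃ (h (b0 x₁ x₄))) - q (b1 x₄ (h (b0 x₁ x₃)))) + b1 x₃ (q (J x₁ x₂ x₄) - q (b1 x₁ (h (b0 x₂ x₄))) + q (b1 x₂ (h (b0 x₁ x₄))) - q (b1 x₄ (h (b0 x₁ x₂)))) - b1 x₄ (q (J x₁ x₂ x₃) - q (b1 x₁ (h (b0 x₂ x₃))) + q (b1 x₂ (h (b0 x₁ x₃))) - q (b1 x₃ (h (b0 x₁ x₂))))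
        - ((q (J (p (b0 x₁ x₂)) x₃ x₄) - q (b1 (p (b0 x₁ x₂)) (h (b0 x₃ x₄))) + q (b1 x₃ (h (b0 (p (b0 x₁ x₂)) x₄))) - q (b1 x₄ (h (b0 (p (b0 x₁ x₂)) x₃)))) - (q (J (p (b0 x₁ x₃)) x₂ x₄) - q (b1 (p (b0 x₁ x₃)) (h (b0 x₂ x₄))) + q (b1 x₂ (h (b0 (p (b0 x₁ x₃)) x₄))) - q (b1 x₄ (h (b0 (p (b0 x₁ x₃)) x₂)))) + (q (J (p (b0 x₁ x₄)) x₂ x₃) - q (b1 (p (b0 x₁ x₄)) (h (b0 x₂ x₃))) + q (b1 x₂ (h (b0 (p (b0 x₁ x₄)) x₃))) - q (b1 x₃ (h (b0 (p (b0 x₁ x₄)) x₂))))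
          + (q (J (p (b0 x₂ x₃)) x₁ x₄) - q (b1 (p (b0 x₂ x₃)) (h (b0 x₁ x₄))) + q (b1 x₁ (h (b0 (p (b0 x₂ x₃)) x₄))) - q (b1 x₄ (h (b0 (p (b0 x₂ x₃)) x₁)))) - (q (J (p (b0 x₂ x₄)) x₁ x₃) - q (b1 (p (b0 x₂ x₄)) (h (b0 x₁ x₃))) + q (b1 x₁ (h (b0 (p (b0 x₂ x₄)) x₃))) - q (b1 x₃ (h (b0 (p (b0 x₂ x₄)) x₁))))
          + (q (J (p (b0 x₃ x₄)) x₁ x₂) - q (b1 (p (b0 x₃ x₄)) (h (b0 x₁ x₂))) + q (b1 x₁ (h (b0 (p (b0 x₃ x₄)) x₂))) - q (b1 x₂ (h (b0 (p (b0 x₃ x₄)) x₁)))))) = -h (b0 x₁ (p (b0 (p (b0 x₂ x₃)) x₄))) + h (b0 x₁ (p (b0 (p (b0 x₂ x₄)) x₃))) - h (b0 x₁ (p (b0 (p (b0 x₃ x₄)) x₂))) + h (b0 x₂ (p (b0 (p (b0 x₁ x₃)) x₄))) - h (b0 x₂ (p (b0 (p (b0 x₁ x₄)) x₃))) + h (b0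 x₂ (p (b0 (p (b0 x₃ x₄)) x₁))) - h (b0 x₃ (p (b0 (p (b0 x₁ x₂)) x₄))) + h (b0 x₃ (p (b0 (p (b0 x₁ x₄)) x₂))) - h (b0 x₃ (p (b0 (p (b0 x₂ x₄)) x₁))) + h (b0 x₄ (p (b0 (p (b0 x₁ x₂)) x₃))) - h (b0 x₄ (p (b0 (p (b0 x₁ x₃)) x₂))) + h (b0 x₄ (p (b0 (p (b0 x₂ x₃)) x₁))) := by
      rw [eA1, eA2, eA3, eA4, eC12, eC13, eC14, eC23, eC24, eC34]
      rw [hL.ident₂ (h (b0 x₃ x₄)) (h (b0 x₁ x₂)), hL.ident₂ (h (b0 x₂ x₄)) (h (b0 x₁ x₃)), hL.ident₂ (h (b0 x₂ x₃)) (h (b0 x₁ x₄))]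
      rw [hswap (p (b0 x₁ x₂)) (p (b0 x₃ x₄)), hswap (p (b0 x₁ x₃)) (p (b0 x₂ x₄)), hswap (p (b0 x₁ x₄)) (p (b0 x₂ x₃))]
      have i5 := hL.ident₅ x₁ x₂ x₃ x₄
      rw [← sub_eq_zero, ← i5]
      abel
    have hdR : d (-h (b0 x₁ (p (b0 (p (b0 x₂ x₃)) x₄))) + h (b0 x₁ (p (b0 (p (b0 x₂ x₄)) x₃))) - h (b0 x₁ (p (b0 (p (b0 x₃ x₄)) x₂))) + h (b0 x₂ (p (b0 (p (b0 x₁ x₃)) x₄))) - h (b0 x₂ (p (b0 (p (b0 x₁ x₄)) x₃))) + h (b0 x₂ (p (b0 (p (b0 x₃ x₄)) x₁))) - h (b0 x₃ (p (b0 (p (b0 x₁ x₂)) x₄))) + h (b0 x₃ (p (b0 (p (b0 x₁ x₄)) x₂))) - h (b0 x₃ (p (b0 (p (b0 x₂ x₄)) x₁))) + h (b0 x₄ (p (b0 (p (b0 x₁ x₂)) x₃))) - h (b0 x₄ (p (b0 (p (b0 x₁ x₃)) x₂))) + h (b0 x₄ (p (b0 (p (b0 x₂ x₃)) x₁)))) =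 0 := by rw [← hER]; exact hdE
    have hRU : (-h (b0 x₁ (p (b0 (p (b0 x₂ x₃)) x₄))) + h (b0 x₁ (p (b0 (p (b0 x₂ x₄)) x₃))) - h (b0 x₁ (p (b0 (p (b0 x₃ x₄)) x₂))) + h (b0 x₂ (p (b0 (p (b0 x₁ x₃)) x₄))) - h (b0 x₂ (p (b0 (p (b0 x₁ x₄)) x₃))) + h (b0 x₂ (p (b0 (p (b0 x₃ x₄)) x₁))) - h (b0 x₃ (p (b0 (p (b0 x₁ x₂)) x₄))) + h (b0 x₃ (p (b0 (p (b0 x₁ x₄)) x₂))) - h (b0 x₃ (p (b0 (p (b0 x₂ x₄)) x₁))) + h (b0 x₄ (p (b0 (p (b0 x₁ x₂)) x₃))) - h (b0 x₄ (p (b0 (p (b0 x₁ x₃)) x₂))) + h (b0 x₄ (p (b0 (p (b0 x₂ x₃)) x₁)))) ∈ U := by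
      repeat first | exact hh_mem _ | apply Submodule.neg_mem | apply Submodule.add_mem | apply Submodule.sub_mem
    have hR0 := KU0 _ ((hK _).mpr hdR) hRU
    exact hER.trans hR0
end

section
/- Let k be a field, let g, g' be Lie algebras over k, let U, U' be k-vector spaces, let (ρ,V), (ρ',V') be representations of g and g' respectively, and let J̃, J̃' be 3-cocycles of (ρ,V) on g and of (ρ',V') on g' respectively. Then the 2-term L∞-algebras L^{g,U,ρ,J̃} and L^{g',U',ρ',J̃'} are isomorphic if and only if there exist: (1) a Lie algebra isomorphism χ : g → g'; (2) a linear isomorphism f : U → U'; (3) a linear isomorphism t : V → V' with t(ρ(x)(v)) = ρ'(χ(x))(t(v)) for all x ∈ g, v ∈ V; and (4) a linear map Φ̃ : g ∧ g → V' such that t(J̃(x₁,x₂,x₃)) − J̃'(χ(x₁),χ(x₂),χ(x₃)) = (δΦ̃)(x₁,x₂,x₃) for all x₁,x₂,x₃ ∈ g, where δ is the Chevalley–Eilenberg differential of the representation (ρ'∘χ, V') of g. -/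
open Function

theorem antisymm_of_alt (k : Type*) [Field k] {A B : Type*} [AddCommGroup A] [Module k A]
    [AddCommGroup B] [Module k B] (P : A → A → B)
    (hl : ∀ y, IsLinearMap k fun x => P x y)
    (hr : ∀ x, IsLinearMap k fun y => P x y)
    (halt : ∀ x, P x x = 0) : ∀ x y, P x y = - P y x := by
  intro x y
  have h : P (x + y) (x + y) = 0 := halt (x + y)
  have h1 : P (x + y) (x + y) = P x (x + y) + P y (x + y) := (hl (x + y)).map_add x y
  rw [(hr x).map_add, (hr y).map_add, halt x, halt y] at h1
  rw [h1] at h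
  have h2 : P x y + P y x = 0 := by
    rw [← h]; abel
  exact eq_neg_of_add_eq_zero_left h2

/-- Theorem 12 of the paper: `L^{g,U,ρ,Jt}` and `L^{g',U',ρ',Jt'}` are
isomorphic 2-term L∞-algebras if and only if there are an isomorphism of Lie algebras
`χ : g → g'`, a linear isomorphism `f : U → U'`, an isomorphism of representations
`t : V → V'` (over `χ`), and a 2-cochain `Φt : g ∧ g → V'` witnessing that `Jt` and
`Jt'` are cohomologous (w.r.t. the representation `ρ' ∘ χ` of `g` on `V'`). -/
theorem stmt6 (k : Type*) [Field k]
    (g : Type*) [LieRing g] [LieAlgebra k g]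
    (g' : Type*) [LieRing g'] [LieAlgebra k g']
    (U : Type*) [AddCommGroup U] [Module k U]
    (U' : Type*) [AddCommGroup U'] [Module k U']
    (V : Type*) [AddCommGroup V] [Module k V]
    (V' : Type*) [AddCommGroup V'] [Module k V']
    (ρ : g → V → V)
    (hρ_lin_left : ∀ v, IsLinearMap k fun x => ρ x v)
    (hρ_lin_right : ∀ x, IsLinearMap k fun v => ρ x v)
    (hρ_bracket : ∀ x y v, ρ ⁅x, y⁆ v = ρ x (ρ y v) - ρ y (ρ x v))
    (ρ' : g' → V' → V')
    (hρ'_lin_left : ∀ v, IsLinearMap k fun x => ρ' x v)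
    (hρ'_lin_right : ∀ x, IsLinearMap k fun v => ρ' x v)
    (hρ'_bracket : ∀ x y v, ρ' ⁅x, y⁆ v = ρ' x (ρ' y v) - ρ' y (ρ' x v))
    (Jt : g → g → g → V)
    (hJt_lin₁ : ∀ y z, IsLinearMap k fun x => Jt x y z)
    (hJt_lin₂ : ∀ x z, IsLinearMap k fun y => Jt x y z)
    (hJt_lin₃ : ∀ x y, IsLinearMap k fun z => Jt x y z)
    (hJt_alt₁ : ∀ x z, Jt x x z = 0)
    (hJt_alt₂ : ∀ x y, Jt x y y = 0)
    (hJt_cocycle : ∀ x₁ x₂ x₃ x₄,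
      ρ x₁ (Jt x₂ x₃ x₄) - ρ x₂ (Jt x₁ x₃ x₄) + ρ x₃ (Jt x₁ x₂ x₄) - ρ x₄ (Jt x₁ x₂ x₃)
        - (Jt ⁅x₁, x₂⁆ x₃ x₄ - Jt ⁅x₁, x₃⁆ x₂ x₄ + Jt ⁅x₁, x₄⁆ x₂ x₃
          + Jt ⁅x₂, x₃⁆ x₁ x₄ - Jt ⁅x₂, x₄⁆ x₁ x₃ + Jt ⁅x₃, x₄⁆ x₁ x₂) = 0)
    (Jt' : g' → g' → g' → V')
    (hJt'_lin₁ : ∀ y z, IsLinearMap k fun x => Jt' x y z)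
    (hJt'_lin₂ : ∀ x z, IsLinearMap k fun y => Jt' x y z)
    (hJt'_lin₃ : ∀ x y, IsLinearMap k fun z => Jt' x y z)
    (hJt'_alt₁ : ∀ x z, Jt' x x z = 0)
    (hJt'_alt₂ : ∀ x y, Jt' x y y = 0)
    (hJt'_cocycle : ∀ x₁ x₂ x₃ x₄,
      ρ' x₁ (Jt' x₂ x₃ x₄) - ρ' x₂ (Jt' x₁ x₃ x₄) + ρ' x₃ (Jt' x₁ x₂ x₄)
          - ρ' x₄ (Jt' x₁ x₂ x₃)
        - (Jt' ⁅x₁, x₂⁆ x₃ x₄ - Jt' ⁅x₁, x₃⁆ x₂ x₄ + Jt' ⁅x₁, x₄⁆ x₂ x₃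
          + Jt' ⁅x₂, x₃⁆ x₁ x₄ - Jt' ⁅x₂, x₄⁆ x₁ x₃ + Jt' ⁅x₃, x₄⁆ x₁ x₂) = 0) :
    (∃ (φ0 : g × U → g' × U') (φ1 : V × U → V' × U') (Φ : g × U → g × U → V' × U'),
      IsMorphism k (g × U) (V × U) (g' × U') (V' × U')
        (fun w => ((0 : g), w.2))
        (fun x y => (⁅x.1, y.1⁆, (0 : U)))
        (fun x v => (ρ x.1 v.1, (0 : U)))
        (fun x y z => (Jt x.1 y.1 z.1, (0 : U)))
        (fun w => ((0 : g'), w.2))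
        (fun x y => (⁅x.1, y.1⁆, (0 : U')))
        (fun x v => (ρ' x.1 v.1, (0 : U')))
        (fun x y z => (Jt' x.1 y.1 z.1, (0 : U')))
        φ0 φ1 Φ ∧
      Function.Bijective φ0 ∧ Function.Bijective φ1)
    ↔
    (∃ (χ : g → g') (f : U → U') (t : V → V'),
      IsLinearMap k χ ∧ Function.Bijective χ ∧ (∀ x y, χ ⁅x, y⁆ = ⁅χ x, χ y⁆) ∧
      IsLinearMap k f ∧ Function.Bijective f ∧
      IsLinearMap k t ∧ Function.Bijective t ∧
      (∀ x v, t (ρ x v) = ρ' (χ x) (t v)) ∧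
      ∃ Φt : g → g → V',
        (∀ y, IsLinearMap k fun x => Φt x y) ∧
        (∀ x, IsLinearMap k fun y => Φt x y) ∧
        (∀ x, Φt x x = 0) ∧
        ∀ x₁ x₂ x₃,
          t (Jt x₁ x₂ x₃) - Jt' (χ x₁) (χ x₂) (χ x₃)
            = ρ' (χ x₁) (Φt x₂ x₃) - ρ' (χ x₂) (Φt x₁ x₃) + ρ' (χ x₃) (Φt x₁ x₂)
              - Φt ⁅x₁, x₂⁆ x₃ + Φt ⁅x₁, x₃⁆ x₂ - Φt ⁅x₂, x₃⁆ x₁) := by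
  constructor
  · -- forward direction
    rintro ⟨φ0, φ1, Φ, hM, h0, h1⟩
    have hφ0z : φ0 0 = 0 := hM.φ0_lin.map_zero
    have hφ1z : φ1 0 = 0 := hM.φ1_lin.map_zero
    -- basic consequences of compat_d
    have hA : ∀ (v : V) (u : U), φ0 ((0 : g), u) = ((0 : g'), (φ1 (v, u)).2) :=
      fun v u => hM.compat_d (v, u)
    have hA1 : ∀ u : U, (φ0 ((0 : g), u)).1 = 0 := fun u => congrArg Prod.fst (hA 0 u)
    have hsnd1 : ∀ (v : V) (u : U), (φ1 (v, u)).2 = (φ0 ((0 : g), u)).2 :=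
      fun v u => (congrArg Prod.snd (hA v u)).symm
    have hker : ∀ v : V, (φ1 (v, (0 : U))).2 = 0 := by
      intro v
      have h := hsnd1 v 0
      have hz : φ0 ((0 : g), (0 : U)) = 0 := hφ0z
      rw [hz] at h
      exact h
    have hsplit0 : ∀ (x : g) (a : U), φ0 (x, a) = φ0 (x, 0) + φ0 (0, a) := by
      intro x a
      rw [show ((x, a) : g × U) = (x, 0) + (0, a) by simp, hM.φ0_lin.map_add]
    have hfst : ∀ (x : g) (a : U), (φ0 (x, a)).1 = (φ0 (x, (0 : U))).1 := by
      intro x a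
      rw [hsplit0 x a, Prod.fst_add, hA1 a, add_zero]
    have hf : ∀ u : U, φ0 ((0 : g), u) = ((0 : g'), (φ0 ((0 : g), u)).2) :=
      fun u => Prod.ext_iff.mpr ⟨hA1 u, rfl⟩
    have ht : ∀ v : V, φ1 (v, (0 : U)) = ((φ1 (v, (0 : U))).1, (0 : U')) :=
      fun v => Prod.ext_iff.mpr ⟨rfl, hker v⟩
    have hfz : (φ0 ((0 : g), (0 : U))).2 = 0 := by
      have hz : φ0 ((0 : g), (0 : U)) = 0 := hφ0z
      rw [hz]
      rfl
    -- injectivity and surjectivity of f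
    have hfinj : ∀ a b : U, (φ0 ((0:g), a)).2 = (φ0 ((0:g), b)).2 → a = b := by
      intro a b hab
      have : φ0 ((0:g), a) = φ0 ((0:g), b) := by
        rw [hf a, hf b, hab]
      exact congrArg Prod.snd (h0.1 this)
    have hfsurj : ∀ u' : U', ∃ u : U, (φ0 ((0:g), u)).2 = u' := by
      intro u'
      obtain ⟨w, hw⟩ := h1.2 ((0 : V'), u')
      exact ⟨w.2, (hsnd1 w.1 w.2).symm.trans (congrArg Prod.snd hw)⟩
    -- Φ is antisymmetric
    have hΦanti : ∀ p q, Φ p q = - Φ q p :=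
      antisymm_of_alt k Φ hM.Φ_lin_left hM.Φ_lin_right hM.Φ_alt
    refine ⟨fun x => (φ0 (x, (0 : U))).1, fun u => (φ0 ((0 : g), u)).2,
      fun v => (φ1 (v, (0 : U))).1, ?_, ?_, ?_, ?_, ⟨fun a b hab => hfinj a b hab, fun u' => hfsurj u'⟩,
      ?_, ?_, ?_, ⟨fun x y => (Φ (x, (0 : U)) (y, (0 : U))).1, ?_, ?_, ?_, ?_⟩⟩
    · -- χ linear
      constructor
      · intro x y
        rw [show ((x + y, (0:U)) : g × U) = (x, 0) + (y, 0) by simp,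
          hM.φ0_lin.map_add, Prod.fst_add]
      · intro c x
        rw [show ((c • x, (0:U)) : g × U) = c • (x, 0) by simp,
          hM.φ0_lin.map_smul, Prod.smul_fst]
    · -- χ bijective
      constructor
      · intro a b hab
        simp only at hab
        obtain ⟨u, hu⟩ := hfsurj ((φ0 (a, (0:U))).2 - (φ0 (b, (0:U))).2)
        have key : φ0 (b, u) = φ0 (a, (0:U)) := by
          rw [hsplit0 b u, hf u, hu]
          refine Prod.ext_iff.mpr ⟨?_, ?_⟩
          · show (φ0 (b, (0:U))).1 + 0 = (φ0 (a, (0:U))).1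
            rw [add_zero, hab]
          · show (φ0 (b,(0:U))).2 + ((φ0 (a,(0:U))).2 - (φ0 (b,(0:U))).2)
              = (φ0 (a,(0:U))).2
            abel
        exact (congrArg Prod.fst (h0.1 key)).symm
      · intro y'
        obtain ⟨w, hw⟩ := h0.2 (y', 0)
        exact ⟨w.1, (hfst w.1 w.2).symm.trans (congrArg Prod.fst hw)⟩
    · -- χ Lie morphism
      intro x y
      have h := hM.compat_b0 (x, (0:U)) (y, (0:U))
      dsimp only at h
      have h1' := congrArg Prod.fst h
      simp only [Prod.fst_sub] at h1'
      exact sub_eq_zero.mp h1'.symm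
    · -- f linear
      constructor
      · intro a b
        rw [show (((0:g), a + b) : g × U) = (0, a) + (0, b) by simp,
          hM.φ0_lin.map_add, Prod.snd_add]
      · intro c a
        rw [show (((0:g), c • a) : g × U) = c • (0, a) by simp,
          hM.φ0_lin.map_smul, Prod.smul_snd]
    · -- t linear
      constructor
      · intro a b
        rw [show ((a + b, (0:U)) : V × U) = (a, 0) + (b, 0) by simp,
          hM.φ1_lin.map_add, Prod.fst_add]
      · intro c a
        rw [show ((c • a, (0:U)) : V × U) = c • (a, 0) by simp,
          hM.φ1_lin.map_smul, Prod.smul_fst]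
    · -- t bijective
      constructor
      · intro a b hab
        simp only at hab
        have : φ1 (a, (0:U)) = φ1 (b, (0:U)) := by
          rw [ht a, ht b, hab]
        exact congrArg Prod.fst (h1.1 this)
      · intro v'
        obtain ⟨w, hw⟩ := h1.2 (v', 0)
        have hu : (φ0 ((0:g), w.2)).2 = 0 := by
          rw [← hsnd1 w.1 w.2]
          exact congrArg Prod.snd hw
        have hw2 : w.2 = 0 := hfinj w.2 0 (by rw [hu, hfz])
        refine ⟨w.1, ?_⟩
        show (φ1 (w.1, (0:U))).1 = v'
        rw [← hw2]
        exact congrArg Prod.fst hw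
    · -- intertwining
      intro x v
      have h := hM.compat_b1 (v, (0:U)) (x, (0:U))
      dsimp only at h
      rw [ht (ρ x v), ht v] at h
      have hz : Φ ((0:g), (0:U)) (x, (0:U)) = 0 := (hM.Φ_lin_left (x, (0:U))).map_zero
      rw [hz] at h
      have h1' := congrArg Prod.fst h
      simp only [Prod.fst_add, Prod.fst_neg, Prod.fst_zero] at h1'
      rw [eq_comm, neg_add_eq_zero] at h1'
      exact h1'
    · -- Φt linear left
      intro y
      constructor
      · intro a b
        dsimp only
        rw [show ((a + b, (0:U)) : g × U) = (a, 0) + (b, 0) by simp,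
          (hM.Φ_lin_left (y, (0:U))).map_add, Prod.fst_add]
      · intro c a
        dsimp only
        rw [show ((c • a, (0:U)) : g × U) = c • (a, 0) by simp,
          (hM.Φ_lin_left (y, (0:U))).map_smul, Prod.smul_fst]
    · -- Φt linear right
      intro x
      constructor
      · intro a b
        dsimp only
        rw [show ((a + b, (0:U)) : g × U) = (a, 0) + (b, 0) by simp,
          (hM.Φ_lin_right (x, (0:U))).map_add, Prod.fst_add]
      · intro c a
        dsimp only
        rw [show ((c • a, (0:U)) : g × U) = c • (a, 0) by simp,
          (hM.Φ_lin_right (x, (0:U))).map_smul, Prod.smul_fst]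
    · -- Φt alternating
      intro x
      dsimp only
      rw [hM.Φ_alt (x, (0:U)), Prod.fst_zero]
    · -- cohomologous condition
      intro x₁ x₂ x₃
      have h := hM.compat_J (x₁, (0:U)) (x₂, (0:U)) (x₃, (0:U))
      dsimp only at h
      rw [ht (Jt x₁ x₂ x₃)] at h
      have h1' := congrArg Prod.fst h
      simp only [Prod.fst_sub, Prod.fst_add] at h1'
      simp only
      rw [h1', hΦanti (x₁,(0:U)) (⁅x₂,x₃⁆,(0:U)), hΦanti (x₂,(0:U)) (⁅x₁,x₃⁆,(0:U)),
        hΦanti (x₃,(0:U)) (⁅x₁,x₂⁆,(0:U))]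
      simp only [Prod.fst_neg]
      abel
  · -- reverse direction
    rintro ⟨χ, f, t, hχl, hχb, hχlie, hfl, hfb, htl, htb, hcm, Φt, hΦl, hΦr, hΦalt, hco⟩
    have hanti : ∀ x y, Φt x y = - Φt y x := antisymm_of_alt k Φt hΦl hΦr hΦalt
    refine ⟨fun w => (χ w.1, f w.2), fun w => (t w.1, f w.2),
      fun x y => (Φt x.1 y.1, (0 : U')), ?_, hχb.prodMap hfb, htb.prodMap hfb⟩
    constructor
    · constructor
      · intro x y
        simp [Prod.ext_iff, hχl.map_add, hfl.map_add]
      · intro c x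
        simp [Prod.ext_iff, hχl.map_smul, hfl.map_smul]
    · constructor
      · intro x y
        simp [Prod.ext_iff, htl.map_add, hfl.map_add]
      · intro c x
        simp [Prod.ext_iff, htl.map_smul, hfl.map_smul]
    · intro y
      constructor
      · intro a b
        simp [Prod.ext_iff, (hΦl y.1).map_add]
      · intro c a
        simp [Prod.ext_iff, (hΦl y.1).map_smul]
    · intro x
      constructor
      · intro a b
        simp [Prod.ext_iff, (hΦr x.1).map_add]
      · intro c a
        simp [Prod.ext_iff, (hΦr x.1).map_smul]
    · intro x
      simp [Prod.ext_iff, hΦalt]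
    · intro v
      simp [Prod.ext_iff, hχl.map_zero]
    · intro x y
      simp [Prod.ext_iff, hχlie, hfl.map_zero]
    · intro v y
      simp [Prod.ext_iff, (hΦl y.1).map_zero, hfl.map_zero, hcm]
    · intro x₁ x₂ x₃
      refine Prod.ext_iff.mpr ⟨?_, ?_⟩
      · show t (Jt x₁.1 x₂.1 x₃.1) - Jt' (χ x₁.1) (χ x₂.1) (χ x₃.1)
          = ρ' (χ x₁.1) (Φt x₂.1 x₃.1) - ρ' (χ x₂.1) (Φt x₁.1 x₃.1)
            + ρ' (χ x₃.1) (Φt x₁.1 x₂.1)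
            + Φt x₁.1 ⁅x₂.1, x₃.1⁆ - Φt x₂.1 ⁅x₁.1, x₃.1⁆ + Φt x₃.1 ⁅x₁.1, x₂.1⁆
        rw [hco x₁.1 x₂.1 x₃.1, hanti x₁.1 ⁅x₂.1, x₃.1⁆, hanti x₂.1 ⁅x₁.1, x₃.1⁆,
          hanti x₃.1 ⁅x₁.1, x₂.1⁆]
        abel
      · show f 0 - 0 = (0 : U') - 0 + 0 + 0 - 0 + 0
        simp [hfl.map_zero]
end

section
/- Let k be a field, let g, g' be Lie algebras over k, let U, U' be k-vector spaces, let (ρ,V), (ρ',V') be representations of g and g' respectively, and let J̃, J̃' be 3-cocycles of (ρ,V) on g and of (ρ',V') on g' respectively. Suppose given a Lie algebra isomorphism χ : g → g', a linear isomorphism f : U → U', a linear isomorphism t : V → V' with t(ρ(x)(v)) = ρ'(χ(x))(t(v)) for all x ∈ g, v ∈ V, and a linear map Φ̃ : g ∧ g → V' with t(J̃(x₁,x₂,x₃)) − J̃'(χ(x₁),χ(x₂),χ(x₃)) = (δΦ̃)(x₁,x₂,x₃) for all xᵢ ∈ g, where δ is the Chevalley–Eilenberg differential of the representation (ρ'∘χ,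 V') of g. Then the pair (φ, Φ), where φ₀ := χ ⊕ f : g⊕U → g'⊕U', φ₁ := t ⊕ f : V⊕U → V'⊕U', and Φ(x⊕a, y⊕b) := Φ̃(x,y) ⊕ 0, is an isomorphism of 2-term L∞-algebras from L^{g,U,ρ,J̃} to L^{g',U',ρ',J̃'}. -/
open Function

/-- the "⇐" construction in Theorem 12 of the paper: given a Lie algebra
isomorphism `χ : g → g'`, a linear isomorphism `f : U → U'`, an intertwiner `t : V → V'`
(a linear isomorphism with `t ∘ ρ(x) = ρ'(χ x) ∘ t`) and a 2-cochain `Φt` with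
`t ∘ Jt − Jt' ∘ χ³ = δ Φt` (w.r.t. the representation `ρ' ∘ χ`), the maps
`φ0 = χ ⊕ f`, `φ1 = t ⊕ f`, `Φ(x⊕a, y⊕b) = Φt(x,y) ⊕ 0` form an isomorphism of 2-term
L∞-algebras from `L^{g,U,ρ,Jt}` to `L^{g',U',ρ',Jt'}`. -/
theorem stmt7 (k : Type*) [Field k]
    (g : Type*) [LieRing g] [LieAlgebra k g]
    (g' : Type*) [LieRing g'] [LieAlgebra k g']
    (U : Type*) [AddCommGroup U] [Module k U]
    (U' : Type*) [AddCommGroup U'] [Module k U']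
    (V : Type*) [AddCommGroup V] [Module k V]
    (V' : Type*) [AddCommGroup V'] [Module k V']
    (ρ : g → V → V)
    (hρ_lin_left : ∀ v, IsLinearMap k fun x => ρ x v)
    (hρ_lin_right : ∀ x, IsLinearMap k fun v => ρ x v)
    (hρ_bracket : ∀ x y v, ρ ⁅x, y⁆ v = ρ x (ρ y v) - ρ y (ρ x v))
    (ρ' : g' → V' → V')
    (hρ'_lin_left : ∀ v, IsLinearMap k fun x => ρ' x v)
    (hρ'_lin_right : ∀ x, IsLinearMap k fun v => ρ' x v)
    (hρ'_bracket : ∀ x y v, ρ' ⁅x, y⁆ v = ρ' x (ρ' y v) - ρ' y (ρ' x v))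
    (Jt : g → g → g → V)
    (hJt_lin₁ : ∀ y z, IsLinearMap k fun x => Jt x y z)
    (hJt_lin₂ : ∀ x z, IsLinearMap k fun y => Jt x y z)
    (hJt_lin₃ : ∀ x y, IsLinearMap k fun z => Jt x y z)
    (hJt_alt₁ : ∀ x z, Jt x x z = 0)
    (hJt_alt₂ : ∀ x y, Jt x y y = 0)
    (hJt_cocycle : ∀ x₁ x₂ x₃ x₄,
      ρ x₁ (Jt x₂ x₃ x₄) - ρ x₂ (Jt x₁ x₃ x₄) + ρ x₃ (Jt x₁ x₂ x₄) - ρ x₄ (Jt x₁ x₂ x₃)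
        - (Jt ⁅x₁, x₂⁆ x₃ x₄ - Jt ⁅x₁, x₃⁆ x₂ x₄ + Jt ⁅x₁, x₄⁆ x₂ x₃
          + Jt ⁅x₂, x₃⁆ x₁ x₄ - Jt ⁅x₂, x₄⁆ x₁ x₃ + Jt ⁅x₃, x₄⁆ x₁ x₂) = 0)
    (Jt' : g' → g' → g' → V')
    (hJt'_lin₁ : ∀ y z, IsLinearMap k fun x => Jt' x y z)
    (hJt'_lin₂ : ∀ x z, IsLinearMap k fun y => Jt' x y z)
    (hJt'_lin₃ : ∀ x y, IsLinearMap k fun z => Jt' x y z)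
    (hJt'_alt₁ : ∀ x z, Jt' x x z = 0)
    (hJt'_alt₂ : ∀ x y, Jt' x y y = 0)
    (hJt'_cocycle : ∀ x₁ x₂ x₃ x₄,
      ρ' x₁ (Jt' x₂ x₃ x₄) - ρ' x₂ (Jt' x₁ x₃ x₄) + ρ' x₃ (Jt' x₁ x₂ x₄)
          - ρ' x₄ (Jt' x₁ x₂ x₃)
        - (Jt' ⁅x₁, x₂⁆ x₃ x₄ - Jt' ⁅x₁, x₃⁆ x₂ x₄ + Jt' ⁅x₁, x₄⁆ x₂ x₃
          + Jt' ⁅x₂, x₃⁆ x₁ x₄ - Jt' ⁅x₂, x₄⁆ x₁ x₃ + Jt' ⁅x₃, x₄⁆ x₁ x₂) = 0)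
    (χ : g → g')
    (hχ_lin : IsLinearMap k χ) (hχ_bij : Function.Bijective χ)
    (hχ_bracket : ∀ x y, χ ⁅x, y⁆ = ⁅χ x, χ y⁆)
    (f : U → U')
    (hf_lin : IsLinearMap k f) (hf_bij : Function.Bijective f)
    (t : V → V')
    (ht_lin : IsLinearMap k t) (ht_bij : Function.Bijective t)
    (ht_intertwine : ∀ x v, t (ρ x v) = ρ' (χ x) (t v))
    (Φt : g → g → V')
    (hΦt_lin_left : ∀ y, IsLinearMap k fun x => Φt x y)
    (hΦt_lin_right : ∀ x, IsLinearMap k fun y => Φt x y)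
    (hΦt_alt : ∀ x, Φt x x = 0)
    (hΦt_cohomologous : ∀ x₁ x₂ x₃,
      t (Jt x₁ x₂ x₃) - Jt' (χ x₁) (χ x₂) (χ x₃)
        = ρ' (χ x₁) (Φt x₂ x₃) - ρ' (χ x₂) (Φt x₁ x₃) + ρ' (χ x₃) (Φt x₁ x₂)
          - Φt ⁅x₁, x₂⁆ x₃ + Φt ⁅x₁, x₃⁆ x₂ - Φt ⁅x₂, x₃⁆ x₁) :
    IsMorphism k (g × U) (V × U) (g' × U') (V' × U')
      (fun w => ((0 : g), w.2))
      (fun x y => (⁅x.1, y.1⁆, (0 : U)))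
      (fun x v => (ρ x.1 v.1, (0 : U)))
      (fun x y z => (Jt x.1 y.1 z.1, (0 : U)))
      (fun w => ((0 : g'), w.2))
      (fun x y => (⁅x.1, y.1⁆, (0 : U')))
      (fun x v => (ρ' x.1 v.1, (0 : U')))
      (fun x y z => (Jt' x.1 y.1 z.1, (0 : U')))
      (fun w => (χ w.1, f w.2))
      (fun w => (t w.1, f w.2))
      (fun x y => (Φt x.1 y.1, (0 : U'))) ∧
    Function.Bijective (fun w : g × U => (χ w.1, f w.2)) ∧
    Function.Bijective (fun w : V × U => (t w.1, f w.2)) := by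

  have hχ0 : χ 0 = 0 := hχ_lin.map_zero
  have hf0 : f 0 = 0 := hf_lin.map_zero
  have ht0 : t 0 = 0 := ht_lin.map_zero
  have hΦl0 : ∀ y, Φt 0 y = 0 := fun y => (hΦt_lin_left y).map_zero
  have hanti : ∀ x y, Φt x y = - Φt y x := by
    intro x y
    have h := hΦt_alt (x + y)
    rw [(hΦt_lin_left (x+y)).map_add, (hΦt_lin_right x).map_add,
      (hΦt_lin_right y).map_add, hΦt_alt, hΦt_alt, zero_add, add_zero] at h
    exact eq_neg_of_add_eq_zero_left h
  refine ⟨?_, ?_, ?_⟩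
  · constructor
    · exact ⟨fun a b => Prod.ext (hχ_lin.map_add _ _) (hf_lin.map_add _ _),
        fun c a => Prod.ext (hχ_lin.map_smul _ _) (hf_lin.map_smul _ _)⟩
    · exact ⟨fun a b => Prod.ext (ht_lin.map_add _ _) (hf_lin.map_add _ _),
        fun c a => Prod.ext (ht_lin.map_smul _ _) (hf_lin.map_smul _ _)⟩
    · intro y
      exact ⟨fun a b => Prod.ext ((hΦt_lin_left _).map_add _ _) (by simp),
        fun c a => Prod.ext ((hΦt_lin_left _).map_smul _ _) (by simp)⟩
    · intro x
      exact ⟨fun a b => Prod.ext ((hΦt_lin_right _).map_add _ _) (by simp),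
        fun c a => Prod.ext ((hΦt_lin_right _).map_smul _ _) (by simp)⟩
    · intro x; exact Prod.ext (hΦt_alt _) rfl
    · intro v; exact Prod.ext hχ0 rfl
    · intro x y
      exact Prod.ext (by simp [hχ_bracket]) (by simp [hf0])
    · intro v y
      refine Prod.ext ?_ ?_
      · simp only [hΦl0]
        have := ht_intertwine y.1 v.1
        simp [this]
      · simp [hf0]
    · intro x₁ x₂ x₃
      refine Prod.ext ?_ (by simp [hf0])
      have h := hΦt_cohomologous x₁.1 x₂.1 x₃.1
      have h1 := hanti (⁅x₂.1, x₃.1⁆) x₁.1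
      have h2 := hanti (⁅x₁.1, x₃.1⁆) x₂.1
      have h3 := hanti (⁅x₁.1, x₂.1⁆) x₃.1
      simp only [Prod.fst_sub, Prod.fst_add]
      rw [h, h1, h2, h3]
      abel
  · exact hχ_bij.prodMap hf_bij
  · exact ht_bij.prodMap hf_bij
end

section
/- Let (φ,Φ) be an isomorphism of 2-term L∞-algebras from L^{g,U,ρ,J̃} to L^{g',U',ρ',J̃'}. Then φ₀ maps the subspace 0⊕U of L₀ = g⊕U bijectively onto the subspace 0⊕U' of L₀' = g'⊕U', and φ₁ maps the subspace V⊕0 of L₁ = V⊕U bijectively onto the subspace V'⊕0 of L₁' = V'⊕U'. In particular U ≅ U' as vector spaces and V ≅ V' as vector spaces. -/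
open Function

/-- part of Theorem 12 of the paper, "⇒" direction: an isomorphism
`(φ,Φ)` of 2-term L∞-algebras from `L^{g,U,ρ,Jt}` to `L^{g',U',ρ',Jt'}` maps `0 ⊕ U`
bijectively onto `0 ⊕ U'` (in degree 0) and `V ⊕ 0` bijectively onto `V' ⊕ 0`
(in degree 1); in particular `U ≅ U'` and `V ≅ V'` as vector spaces. -/
theorem stmt8 (k : Type*) [Field k]
    (g : Type*) [LieRing g] [LieAlgebra k g]
    (g' : Type*) [LieRing g'] [LieAlgebra k g']
    (U : Type*) [AddCommGroup U] [Module k U]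
    (U' : Type*) [AddCommGroup U'] [Module k U']
    (V : Type*) [AddCommGroup V] [Module k V]
    (V' : Type*) [AddCommGroup V'] [Module k V']
    (ρ : g → V → V)
    (hρ_lin_left : ∀ v, IsLinearMap k fun x => ρ x v)
    (hρ_lin_right : ∀ x, IsLinearMap k fun v => ρ x v)
    (hρ_bracket : ∀ x y v, ρ ⁅x, y⁆ v = ρ x (ρ y v) - ρ y (ρ x v))
    (ρ' : g' → V' → V')
    (hρ'_lin_left : ∀ v, IsLinearMap k fun x => ρ' x v)
    (hρ'_lin_right : ∀ x, IsLinearMap k fun v => ρ' x v)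
    (hρ'_bracket : ∀ x y v, ρ' ⁅x, y⁆ v = ρ' x (ρ' y v) - ρ' y (ρ' x v))
    (Jt : g → g → g → V)
    (hJt_lin₁ : ∀ y z, IsLinearMap k fun x => Jt x y z)
    (hJt_lin₂ : ∀ x z, IsLinearMap k fun y => Jt x y z)
    (hJt_lin₃ : ∀ x y, IsLinearMap k fun z => Jt x y z)
    (hJt_alt₁ : ∀ x z, Jt x x z = 0)
    (hJt_alt₂ : ∀ x y, Jt x y y = 0)
    (hJt_cocycle : ∀ x₁ x₂ x₃ x₄,
      ρ x₁ (Jt x₂ x₃ x₄) - ρ x₂ (Jt x₁ x₃ x₄) + ρ x₃ (Jt x₁ x₂ x₄) - ρ x₄ (Jt x₁ x₂ x₃)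
        - (Jt ⁅x₁, x₂⁆ x₃ x₄ - Jt ⁅x₁, x₃⁆ x₂ x₄ + Jt ⁅x₁, x₄⁆ x₂ x₃
          + Jt ⁅x₂, x₃⁆ x₁ x₄ - Jt ⁅x₂, x₄⁆ x₁ x₃ + Jt ⁅x₃, x₄⁆ x₁ x₂) = 0)
    (Jt' : g' → g' → g' → V')
    (hJt'_lin₁ : ∀ y z, IsLinearMap k fun x => Jt' x y z)
    (hJt'_lin₂ : ∀ x z, IsLinearMap k fun y => Jt' x y z)
    (hJt'_lin₃ : ∀ x y, IsLinearMap k fun z => Jt' x y z)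
    (hJt'_alt₁ : ∀ x z, Jt' x x z = 0)
    (hJt'_alt₂ : ∀ x y, Jt' x y y = 0)
    (hJt'_cocycle : ∀ x₁ x₂ x₃ x₄,
      ρ' x₁ (Jt' x₂ x₃ x₄) - ρ' x₂ (Jt' x₁ x₃ x₄) + ρ' x₃ (Jt' x₁ x₂ x₄)
          - ρ' x₄ (Jt' x₁ x₂ x₃)
        - (Jt' ⁅x₁, x₂⁆ x₃ x₄ - Jt' ⁅x₁, x₃⁆ x₂ x₄ + Jt' ⁅x₁, x₄⁆ x₂ x₃
          + Jt' ⁅x₂, x₃⁆ x₁ x₄ - Jt' ⁅x₂, x₄⁆ x₁ x₃ + Jt' ⁅x₃, x₄⁆ x₁ x₂) = 0)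
    (φ0 : g × U → g' × U') (φ1 : V × U → V' × U') (Φ : g × U → g × U → V' × U')
    (hmor : IsMorphism k (g × U) (V × U) (g' × U') (V' × U')
      (fun w => ((0 : g), w.2))
      (fun x y => (⁅x.1, y.1⁆, (0 : U)))
      (fun x v => (ρ x.1 v.1, (0 : U)))
      (fun x y z => (Jt x.1 y.1 z.1, (0 : U)))
      (fun w => ((0 : g'), w.2))
      (fun x y => (⁅x.1, y.1⁆, (0 : U')))
      (fun x v => (ρ' x.1 v.1, (0 : U')))
      (fun x y z => (Jt' x.1 y.1 z.1, (0 : U')))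
      φ0 φ1 Φ)
    (hφ0_bij : Function.Bijective φ0) (hφ1_bij : Function.Bijective φ1)
    :
    Set.BijOn φ0 {w : g × U | w.1 = 0} {w : g' × U' | w.1 = 0} ∧
    Set.BijOn φ1 {w : V × U | w.2 = 0} {w : V' × U' | w.2 = 0} ∧
    (∃ e : U → U', IsLinearMap k e ∧ Function.Bijective e) ∧
    (∃ e : V → V', IsLinearMap k e ∧ Function.Bijective e) := by
  have hd : ∀ v : V × U, φ0 ((0 : g), v.2) = ((0 : g'), (φ1 v).2) := hmor.compat_d
  -- φ0 maps the source set into the target set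
  have h0maps : ∀ w : g × U, w.1 = 0 → (φ0 w).1 = 0 := by
    intro w hw
    have hw' : w = ((0 : g), w.2) := Prod.ext hw rfl
    rw [hw', hd (((0 : V), w.2) : V × U)]
  -- φ1 maps kernel to kernel
  have h1maps : ∀ v : V × U, v.2 = 0 → (φ1 v).2 = 0 := by
    intro v hv
    have h := hd v
    rw [hv] at h
    have hz : ((0 : g), (0 : U)) = (0 : g × U) := rfl
    rw [hz, hmor.φ0_lin.map_zero] at h
    have := congrArg Prod.snd h
    simpa using this.symm
  have h1ker : ∀ v : V × U, (φ1 v).2 = 0 → v.2 = 0 := by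
    intro v hv
    have h := hd v
    rw [hv] at h
    have hz : ((0 : g'), (0 : U')) = (0 : g' × U') := rfl
    rw [hz, ← hmor.φ0_lin.map_zero] at h
    have := congrArg Prod.snd (hφ0_bij.1 h)
    simpa using this
  constructor
  · refine ⟨fun w hw => h0maps w hw, hφ0_bij.1.injOn, ?_⟩
    intro w' hw'
    obtain ⟨v, hv⟩ := hφ1_bij.2 (((0 : V'), w'.2) : V' × U')
    refine ⟨((0 : g), v.2), rfl, ?_⟩
    rw [hd v, hv]
    have hw'' : w'.1 = 0 := hw'
    exact Prod.ext hw''.symm rfl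
  refine ⟨⟨fun v hv => h1maps v hv, hφ1_bij.1.injOn, ?_⟩, ?_, ?_⟩
  · intro v' hv'
    obtain ⟨v, hv⟩ := hφ1_bij.2 v'
    refine ⟨v, ?_, hv⟩
    exact h1ker v (by rw [hv]; exact hv')
  · -- U ≅ U'
    refine ⟨fun u => (φ0 ((0 : g), u)).2, ⟨?_, ?_⟩, ?_, ?_⟩
    · intro u u'
      have : (((0 : g), u + u') : g × U) = ((0 : g), u) + ((0 : g), u') := by
        simp [Prod.ext_iff]
      rw [this, hmor.φ0_lin.map_add]; rfl
    · intro c u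
      have : (((0 : g), c • u) : g × U) = c • (((0 : g), u) : g × U) := by
        simp [Prod.ext_iff]
      rw [this, hmor.φ0_lin.map_smul]; rfl
    · intro u u' h
      have h1 : φ0 ((0 : g), u) = φ0 ((0 : g), u') := by
        refine Prod.ext ?_ h
        rw [h0maps _ rfl, h0maps _ rfl]
      have := hφ0_bij.1 h1
      exact (congrArg Prod.snd this)
    · intro u'
      obtain ⟨v, hv⟩ := hφ1_bij.2 (((0 : V'), u') : V' × U')
      refine ⟨v.2, ?_⟩
      show (φ0 ((0 : g), v.2)).2 = u'
      rw [hd v, hv]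
  · -- V ≅ V'
    refine ⟨fun v => (φ1 (v, (0 : U))).1, ⟨?_, ?_⟩, ?_, ?_⟩
    · intro v v'
      have : ((v + v', (0 : U)) : V × U) = (v, 0) + (v', 0) := by
        simp [Prod.ext_iff]
      rw [this, hmor.φ1_lin.map_add]; rfl
    · intro c v
      have : ((c • v, (0 : U)) : V × U) = c • ((v, (0 : U)) : V × U) := by
        simp [Prod.ext_iff]
      rw [this, hmor.φ1_lin.map_smul]; rfl
    · intro v v' h
      have h1 : φ1 (v, (0 : U)) = φ1 (v', (0 : U)) := by
        refine Prod.ext h ?_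
        rw [h1maps _ rfl, h1maps _ rfl]
      have := hφ1_bij.1 h1
      exact (congrArg Prod.fst this)
    · intro v'
      obtain ⟨w, hw⟩ := hφ1_bij.2 ((v', (0 : U')) : V' × U')
      have hw2 : w.2 = 0 := h1ker w (by rw [hw])
      refine ⟨w.1, ?_⟩
      show (φ1 (w.1, (0 : U))).1 = v'
      have : ((w.1, (0 : U)) : V × U) = w := Prod.ext rfl hw2.symm
      rw [this, hw]
end

section
/- Let (φ,Φ) be an isomorphism of 2-term L∞-algebras from L^{g,U,ρ,J̃} to L^{g',U',ρ',J̃'}. Define τ : g → g' by letting τ(x) be the g'-component of φ₀(x⊕0) ∈ g'⊕U', and define t : V → V' by letting t(v) be the V'-component of φ₁(v⊕0) ∈ V'⊕U'. Then τ is a Lie algebra isomorphism from (g,[·,·]_g) to (g',[·,·]_{g'}), t is a linear isomorphism, and t(ρ(y)(v)) = ρ'(τ(y))(t(v)) for all y ∈ g and v ∈ V; that is, t is an isomorphism of representations from (ρ,V) to (ρ'∘τ, V'). -/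
open Function

/-!
The differentials of both 2-term L∞-algebras are the projections `(v, u) ↦ (0, u)`. Compatibility
of `(φ, Φ)` with them, `φ₀ (0, u) = (0, (φ₁ (v, u)).2)`, together with bijectivity of `φ₀` and `φ₁`,
shows that `φ₁` restricts to a bijection `V × 0 ≃ V' × 0` and that `φ₀` maps `0 × U` onto
`0 × U'`, hence induces a bijection `g ≃ g'` of the quotients. The bracket compatibilities of a
morphism hold only up to `d' ∘ Φ` resp. `Φ ∘ d`, and both vanish on the components in question.
-/

namespace LinearMap

variable {k A B A' B' : Type*} [Semiring k]
  [AddCommGroup A] [Module k A] [AddCommGroup B] [Module k B]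
  [AddCommGroup A'] [Module k A'] [AddCommGroup B'] [Module k B']

def fstBlock (f : A × B →ₗ[k] A' × B') : A →ₗ[k] A' :=
  fst k A' B' ∘ₗ f ∘ₗ inl k A B

@[simp]
theorem fstBlock_apply (f : A × B →ₗ[k] A' × B') (a : A) : f.fstBlock a = (f (a, 0)).1 :=
  rfl

theorem bijective_fstBlock_of_snd_eq_zero_iff {f : A × B →ₗ[k] A' × B'} (hf : Bijective f)
    (hsnd : ∀ w, (f w).2 = 0 ↔ w.2 = 0) : Bijective f.fstBlock := by
  refine ⟨(injective_iff_map_eq_zero _).2 fun a ha => ?_, fun a' => ?_⟩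
  · have hfa : f (a, 0) = 0 := Prod.ext ha ((hsnd _).2 rfl)
    exact congrArg Prod.fst (hf.1 (hfa.trans f.map_zero.symm))
  · obtain ⟨w, hw⟩ := hf.2 (a', 0)
    have hw2 : w.2 = 0 := (hsnd w).1 (by rw [hw])
    refine ⟨w.1, ?_⟩
    rw [fstBlock_apply, ← hw2, hw]

theorem bijective_fstBlock_of_fst_eq_zero_iff {f : A × B →ₗ[k] A' × B'} (hf : Bijective f)
    (hfst : ∀ w, (f w).1 = 0 ↔ w.1 = 0) : Bijective f.fstBlock := by
  refine ⟨(injective_iff_map_eq_zero _).2 fun a ha => (hfst (a, 0)).1 ha, fun a' => ?_⟩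
  obtain ⟨w, hw⟩ := hf.2 (a', 0)
  refine ⟨w.1, ?_⟩
  have hsplit : ((w.1, 0) : A × B) = w - (0, w.2) := by ext <;> simp
  rw [fstBlock_apply, hsplit, map_sub, Prod.fst_sub, hw, (hfst (0, w.2)).2 rfl, sub_zero]

end LinearMap

namespace IsMorphism

variable {k : Type*} [Field k] {g U V g' U' V' : Type*}
  [AddCommGroup g] [Module k g] [AddCommGroup U] [Module k U] [AddCommGroup V] [Module k V]
  [AddCommGroup g'] [Module k g'] [AddCommGroup U'] [Module k U'] [AddCommGroup V'] [Module k V']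
  {d : V × U → g × U} {d' : V' × U' → g' × U'}
  {b0 : g × U → g × U → g × U} {b1 : g × U → V × U → V × U} {J : g × U → g × U → g × U → V × U}
  {b0' : g' × U' → g' × U' → g' × U'} {b1' : g' × U' → V' × U' → V' × U'}
  {J' : g' × U' → g' × U' → g' × U' → V' × U'}
  {φ0 : g × U → g' × U'} {φ1 : V × U → V' × U'} {Φ : g × U → g × U → V' × U'}

theorem snd_φ1_eq_zero_iff
    (hmor : IsMorphism k (g × U) (V × U) (g' × U') (V' × U') (fun w => (0, w.2)) b0 b1 J
      (fun w => (0, w.2)) b0' b1' J' φ0 φ1 Φ)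
    (hφ0 : Injective φ0) (w : V × U) : (φ1 w).2 = 0 ↔ w.2 = 0 := by
  have hd : φ0 (0, w.2) = (0, (φ1 w).2) := hmor.compat_d w
  constructor
  · intro h
    rw [h, ← Prod.zero_eq_mk, ← hmor.φ0_lin.mk'_apply, map_eq_zero_iff _ hφ0] at hd
    exact congrArg Prod.snd hd
  · intro h
    rw [h, ← Prod.zero_eq_mk, ← hmor.φ0_lin.mk'_apply, map_zero] at hd
    exact (congrArg Prod.snd hd).symm

theorem fst_φ0_eq_zero_iff
    (hmor : IsMorphism k (g × U) (V × U) (g' × U') (V' × U') (fun w => (0, w.2)) b0 b1 J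
      (fun w => (0, w.2)) b0' b1' J' φ0 φ1 Φ)
    (hφ0 : Injective φ0) (hφ1 : Surjective φ1) (w : g × U) : (φ0 w).1 = 0 ↔ w.1 = 0 := by
  constructor
  · intro h
    obtain ⟨z, hz⟩ := hφ1 (0, (φ0 w).2)
    have hd : φ0 (0, z.2) = φ0 w := (hmor.compat_d z).trans (by rw [hz, ← h])
    exact (congrArg Prod.fst (hφ0 hd)).symm
  · intro h
    have hw : w = (0, w.2) := Prod.ext h rfl
    rw [hw]
    exact congrArg Prod.fst (hmor.compat_d (0, w.2))

theorem fst_φ0_b0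
    (hmor : IsMorphism k (g × U) (V × U) (g' × U') (V' × U') d b0 b1 J
      (fun w => (0, w.2)) b0' b1' J' φ0 φ1 Φ)
    (x y : g × U) : (φ0 (b0 x y)).1 = (b0' (φ0 x) (φ0 y)).1 :=
  (sub_eq_zero.1 (congrArg Prod.fst (hmor.compat_b0 x y)).symm)

theorem φ1_b1_of_snd_eq_zero
    (hmor : IsMorphism k (g × U) (V × U) (g' × U') (V' × U') (fun w => (0, w.2)) b0 b1 J
      d' b0' b1' J' φ0 φ1 Φ)
    {v : V × U} (hv : v.2 = 0) (y : g × U) : φ1 (b1 y v) = b1' (φ0 y) (φ1 v) := by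
  have h := hmor.compat_b1 v y
  rw [show ((0 : g), v.2) = 0 by rw [hv]; rfl, (hmor.Φ_lin_left y).map_zero] at h
  exact neg_add_eq_zero.1 h.symm

end IsMorphism

theorem stmt9_general (k : Type*) [Field k]
    (g : Type*) [LieRing g] [LieAlgebra k g]
    (g' : Type*) [LieRing g'] [LieAlgebra k g']
    (U : Type*) [AddCommGroup U] [Module k U]
    (U' : Type*) [AddCommGroup U'] [Module k U']
    (V : Type*) [AddCommGroup V] [Module k V]
    (V' : Type*) [AddCommGroup V'] [Module k V']
    (ρ : g → V → V)
    (ρ' : g' → V' → V')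
    (Jt : g → g → g → V)
    (Jt' : g' → g' → g' → V')
    (φ0 : g × U → g' × U') (φ1 : V × U → V' × U') (Φ : g × U → g × U → V' × U')
    (hmor : IsMorphism k (g × U) (V × U) (g' × U') (V' × U')
      (fun w => ((0 : g), w.2))
      (fun x y => (⁅x.1, y.1⁆, (0 : U)))
      (fun x v => (ρ x.1 v.1, (0 : U)))
      (fun x y z => (Jt x.1 y.1 z.1, (0 : U)))
      (fun w => ((0 : g'), w.2))
      (fun x y => (⁅x.1, y.1⁆, (0 : U')))
      (fun x v => (ρ' x.1 v.1, (0 : U')))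
      (fun x y z => (Jt' x.1 y.1 z.1, (0 : U')))
      φ0 φ1 Φ)
    (hφ0_bij : Function.Bijective φ0) (hφ1_bij : Function.Bijective φ1)
    :
    IsLinearMap k (fun x : g => (φ0 (x, 0)).1) ∧
    Function.Bijective (fun x : g => (φ0 (x, 0)).1) ∧
    (∀ x y : g, (φ0 (⁅x, y⁆, 0)).1 = ⁅(φ0 (x, 0)).1, (φ0 (y, 0)).1⁆) ∧
    IsLinearMap k (fun v : V => (φ1 (v, 0)).1) ∧
    Function.Bijective (fun v : V => (φ1 (v, 0)).1) ∧
    (∀ (y : g) (v : V),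
      (φ1 (ρ y v, 0)).1 = ρ' (φ0 (y, 0)).1 (φ1 (v, 0)).1) := by
  set τ := (hmor.φ0_lin.mk' φ0).fstBlock
  set t := (hmor.φ1_lin.mk' φ1).fstBlock
  have hτ : Bijective τ :=
    LinearMap.bijective_fstBlock_of_fst_eq_zero_iff hφ0_bij
      (hmor.fst_φ0_eq_zero_iff hφ0_bij.1 hφ1_bij.2)
  have ht : Bijective t :=
    LinearMap.bijective_fstBlock_of_snd_eq_zero_iff hφ1_bij (hmor.snd_φ1_eq_zero_iff hφ0_bij.1)
  exact ⟨τ.isLinear, hτ, fun x y => hmor.fst_φ0_b0 (x, 0) (y, 0), t.isLinear, ht,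
    fun y v => congrArg Prod.fst (hmor.φ1_b1_of_snd_eq_zero (v := (v, 0)) rfl (y, 0))⟩

/-- part of Theorem 12 of the paper, "⇒" direction: given an isomorphism
`(φ,Φ)` of 2-term L∞-algebras from `L^{g,U,ρ,Jt}` to `L^{g',U',ρ',Jt'}`, the maps
`τ(x) := (φ0(x,0)).1` (the `g'`-component) and `t(v) := (φ1(v,0)).1` (the `V'`-component)
are respectively a Lie algebra isomorphism `g → g'` and an isomorphism of representations
`(ρ,V) → (ρ' ∘ τ, V')`. -/
theorem stmt9 (k : Type*) [Field k]
    (g : Type*) [LieRing g] [LieAlgebra k g]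
    (g' : Type*) [LieRing g'] [LieAlgebra k g']
    (U : Type*) [AddCommGroup U] [Module k U]
    (U' : Type*) [AddCommGroup U'] [Module k U']
    (V : Type*) [AddCommGroup V] [Module k V]
    (V' : Type*) [AddCommGroup V'] [Module k V']
    (ρ : g → V → V)
    (hρ_lin_left : ∀ v, IsLinearMap k fun x => ρ x v)
    (hρ_lin_right : ∀ x, IsLinearMap k fun v => ρ x v)
    (hρ_bracket : ∀ x y v, ρ ⁅x, y⁆ v = ρ x (ρ y v) - ρ y (ρ x v))
    (ρ' : g' → V' → V')
    (hρ'_lin_left : ∀ v, IsLinearMap k fun x => ρ' x v)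
    (hρ'_lin_right : ∀ x, IsLinearMap k fun v => ρ' x v)
    (hρ'_bracket : ∀ x y v, ρ' ⁅x, y⁆ v = ρ' x (ρ' y v) - ρ' y (ρ' x v))
    (Jt : g → g → g → V)
    (hJt_lin₁ : ∀ y z, IsLinearMap k fun x => Jt x y z)
    (hJt_lin₂ : ∀ x z, IsLinearMap k fun y => Jt x y z)
    (hJt_lin₃ : ∀ x y, IsLinearMap k fun z => Jt x y z)
    (hJt_alt₁ : ∀ x z, Jt x x z = 0)
    (hJt_alt₂ : ∀ x y, Jt x y y = 0)
    (hJt_cocycle : ∀ x₁ x₂ x₃ x₄,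
      ρ x₁ (Jt x₂ x₃ x₄) - ρ x₂ (Jt x₁ x₃ x₄) + ρ x₃ (Jt x₁ x₂ x₄) - ρ x₄ (Jt x₁ x₂ x₃)
        - (Jt ⁅x₁, x₂⁆ x₃ x₄ - Jt ⁅x₁, x₃⁆ x₂ x₄ + Jt ⁅x₁, x₄⁆ x₂ x₃
          + Jt ⁅x₂, x₃⁆ x₁ x₄ - Jt ⁅x₂, x₄⁆ x₁ x₃ + Jt ⁅x₃, x₄⁆ x₁ x₂) = 0)
    (Jt' : g' → g' → g' → V')
    (hJt'_lin₁ : ∀ y z, IsLinearMap k fun x => Jt' x y z)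
    (hJt'_lin₂ : ∀ x z, IsLinearMap k fun y => Jt' x y z)
    (hJt'_lin₃ : ∀ x y, IsLinearMap k fun z => Jt' x y z)
    (hJt'_alt₁ : ∀ x z, Jt' x x z = 0)
    (hJt'_alt₂ : ∀ x y, Jt' x y y = 0)
    (hJt'_cocycle : ∀ x₁ x₂ x₃ x₄,
      ρ' x₁ (Jt' x₂ x₃ x₄) - ρ' x₂ (Jt' x₁ x₃ x₄) + ρ' x₃ (Jt' x₁ x₂ x₄)
          - ρ' x₄ (Jt' x₁ x₂ x₃)
        - (Jt' ⁅x₁, x₂⁆ x₃ x₄ - Jt' ⁅x₁, x₃⁆ x₂ x₄ + Jt' ⁅x₁, x₄⁆ x₂ x₃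
          + Jt' ⁅x₂, x₃⁆ x₁ x₄ - Jt' ⁅x₂, x₄⁆ x₁ x₃ + Jt' ⁅x₃, x₄⁆ x₁ x₂) = 0)
    (φ0 : g × U → g' × U') (φ1 : V × U → V' × U') (Φ : g × U → g × U → V' × U')
    (hmor : IsMorphism k (g × U) (V × U) (g' × U') (V' × U')
      (fun w => ((0 : g), w.2))
      (fun x y => (⁅x.1, y.1⁆, (0 : U)))
      (fun x v => (ρ x.1 v.1, (0 : U)))
      (fun x y z => (Jt x.1 y.1 z.1, (0 : U)))
      (fun w => ((0 : g'), w.2))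
      (fun x y => (⁅x.1, y.1⁆, (0 : U')))
      (fun x v => (ρ' x.1 v.1, (0 : U')))
      (fun x y z => (Jt' x.1 y.1 z.1, (0 : U')))
      φ0 φ1 Φ)
    (hφ0_bij : Function.Bijective φ0) (hφ1_bij : Function.Bijective φ1)
    :
    IsLinearMap k (fun x : g => (φ0 (x, 0)).1) ∧
    Function.Bijective (fun x : g => (φ0 (x, 0)).1) ∧
    (∀ x y : g, (φ0 (⁅x, y⁆, 0)).1 = ⁅(φ0 (x, 0)).1, (φ0 (y, 0)).1⁆) ∧
    IsLinearMap k (fun v : V => (φ1 (v, 0)).1) ∧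
    Function.Bijective (fun v : V => (φ1 (v, 0)).1) ∧
    (∀ (y : g) (v : V),
      (φ1 (ρ y v, 0)).1 = ρ' (φ0 (y, 0)).1 (φ1 (v, 0)).1) :=
  stmt9_general k g g' U U' V V' ρ ρ' Jt Jt' φ0 φ1 Φ hmor hφ0_bij hφ1_bij
end

section
/- Let (φ,Φ) be an isomorphism of 2-term L∞-algebras from L^{g,U,ρ,J̃} to L^{g',U',ρ',J̃'}. Define τ : g → g' by letting τ(x) be the g'-component of φ₀(x⊕0), define t : V → V' by letting t(v) be the V'-component of φ₁(v⊕0), let r : V'⊕U' → V' be the projection, and let Ψ : g ∧ g → V' be given by Ψ(x,y) := r(Φ(x⊕0, y⊕0)). Then for all x₁,x₂,x₃ ∈ g: t(J̃(x₁,x₂,x₃)) − J̃'(τ(x₁),τ(x₂),τ(x₃)) = (δΨ)(x₁,x₂,x₃), where δ is the Chevalley–Eilenberg differential of the representation (ρ'∘τ, V') of g; that is, J̃ and J̃' are cohomologous. -/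
open Function

/-- part of Theorem 12 of the paper, "⇒" direction: given an isomorphism
`(φ,Φ)` of 2-term L∞-algebras from `L^{g,U,ρ,Jt}` to `L^{g',U',ρ',Jt'}`, with
`τ(x) := (φ0(x,0)).1`, `t(v) := (φ1(v,0)).1` and `Ψ(x,y) := (Φ((x,0),(y,0))).1`
(the `V'`-component), one has `t ∘ Jt − Jt' ∘ τ³ = δΨ`, the Chevalley–Eilenberg
coboundary w.r.t. the representation `ρ' ∘ τ` of `g` on `V'`; i.e. `Jt` and `Jt'`
are cohomologous. -/
theorem stmt10 (k : Type*) [Field k]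
    (g : Type*) [LieRing g] [LieAlgebra k g]
    (g' : Type*) [LieRing g'] [LieAlgebra k g']
    (U : Type*) [AddCommGroup U] [Module k U]
    (U' : Type*) [AddCommGroup U'] [Module k U']
    (V : Type*) [AddCommGroup V] [Module k V]
    (V' : Type*) [AddCommGroup V'] [Module k V']
    (ρ : g → V → V)
    (hρ_lin_left : ∀ v, IsLinearMap k fun x => ρ x v)
    (hρ_lin_right : ∀ x, IsLinearMap k fun v => ρ x v)
    (hρ_bracket : ∀ x y v, ρ ⁅x, y⁆ v = ρ x (ρ y v) - ρ y (ρ x v))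
    (ρ' : g' → V' → V')
    (hρ'_lin_left : ∀ v, IsLinearMap k fun x => ρ' x v)
    (hρ'_lin_right : ∀ x, IsLinearMap k fun v => ρ' x v)
    (hρ'_bracket : ∀ x y v, ρ' ⁅x, y⁆ v = ρ' x (ρ' y v) - ρ' y (ρ' x v))
    (Jt : g → g → g → V)
    (hJt_lin₁ : ∀ y z, IsLinearMap k fun x => Jt x y z)
    (hJt_lin₂ : ∀ x z, IsLinearMap k fun y => Jt x y z)
    (hJt_lin₃ : ∀ x y, IsLinearMap k fun z => Jt x y z)
    (hJt_alt₁ : ∀ x z, Jt x x z = 0)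
    (hJt_alt₂ : ∀ x y, Jt x y y = 0)
    (hJt_cocycle : ∀ x₁ x₂ x₃ x₄,
      ρ x₁ (Jt x₂ x₃ x₄) - ρ x₂ (Jt x₁ x₃ x₄) + ρ x₃ (Jt x₁ x₂ x₄) - ρ x₄ (Jt x₁ x₂ x₃)
        - (Jt ⁅x₁, x₂⁆ x₃ x₄ - Jt ⁅x₁, x₃⁆ x₂ x₄ + Jt ⁅x₁, x₄⁆ x₂ x₃
          + Jt ⁅x₂, x₃⁆ x₁ x₄ - Jt ⁅x₂, x₄⁆ x₁ x₃ + Jt ⁅x₃, x₄⁆ x₁ x₂) = 0)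
    (Jt' : g' → g' → g' → V')
    (hJt'_lin₁ : ∀ y z, IsLinearMap k fun x => Jt' x y z)
    (hJt'_lin₂ : ∀ x z, IsLinearMap k fun y => Jt' x y z)
    (hJt'_lin₃ : ∀ x y, IsLinearMap k fun z => Jt' x y z)
    (hJt'_alt₁ : ∀ x z, Jt' x x z = 0)
    (hJt'_alt₂ : ∀ x y, Jt' x y y = 0)
    (hJt'_cocycle : ∀ x₁ x₂ x₃ x₄,
      ρ' x₁ (Jt' x₂ x₃ x₄) - ρ' x₂ (Jt' x₁ x₃ x₄) + ρ' x₃ (Jt' x₁ x₂ x₄)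
          - ρ' x₄ (Jt' x₁ x₂ x₃)
        - (Jt' ⁅x₁, x₂⁆ x₃ x₄ - Jt' ⁅x₁, x₃⁆ x₂ x₄ + Jt' ⁅x₁, x₄⁆ x₂ x₃
          + Jt' ⁅x₂, x₃⁆ x₁ x₄ - Jt' ⁅x₂, x₄⁆ x₁ x₃ + Jt' ⁅x₃, x₄⁆ x₁ x₂) = 0)
    (φ0 : g × U → g' × U') (φ1 : V × U → V' × U') (Φ : g × U → g × U → V' × U')
    (hmor : IsMorphism k (g × U) (V × U) (g' × U') (V' × U')
      (fun w => ((0 : g), w.2))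
      (fun x y => (⁅x.1, y.1⁆, (0 : U)))
      (fun x v => (ρ x.1 v.1, (0 : U)))
      (fun x y z => (Jt x.1 y.1 z.1, (0 : U)))
      (fun w => ((0 : g'), w.2))
      (fun x y => (⁅x.1, y.1⁆, (0 : U')))
      (fun x v => (ρ' x.1 v.1, (0 : U')))
      (fun x y z => (Jt' x.1 y.1 z.1, (0 : U')))
      φ0 φ1 Φ)
    (hφ0_bij : Function.Bijective φ0) (hφ1_bij : Function.Bijective φ1)
    :
    ∀ x₁ x₂ x₃ : g,
      (φ1 (Jt x₁ x₂ x₃, 0)).1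
          - Jt' (φ0 (x₁, 0)).1 (φ0 (x₂, 0)).1 (φ0 (x₃, 0)).1
        = ρ' (φ0 (x₁, 0)).1 (Φ (x₂, 0) (x₃, 0)).1
            - ρ' (φ0 (x₂, 0)).1 (Φ (x₁, 0) (x₃, 0)).1
            + ρ' (φ0 (x₃, 0)).1 (Φ (x₁, 0) (x₂, 0)).1
            - (Φ (⁅x₁, x₂⁆, 0) (x₃, 0)).1
            + (Φ (⁅x₁, x₃⁆, 0) (x₂, 0)).1
            - (Φ (⁅x₂, x₃⁆, 0) (x₁, 0)).1 := by
  intro x₁ x₂ x₃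
  have hanti : ∀ x y : g × U, Φ x y = - Φ y x := by
    intro x y
    have h0 := hmor.Φ_alt (x + y)
    rw [(hmor.Φ_lin_left (x + y)).map_add, (hmor.Φ_lin_right x).map_add,
      (hmor.Φ_lin_right y).map_add, hmor.Φ_alt x, hmor.Φ_alt y] at h0
    have : Φ x y + Φ y x = 0 := by
      rw [← h0]; abel
    exact eq_neg_of_add_eq_zero_left this
  have h := hmor.compat_J (x₁, 0) (x₂, 0) (x₃, 0)
  have h1 := congrArg Prod.fst h
  simp only [Prod.fst_sub, Prod.fst_add, Prod.fst_neg] at h1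
  rw [hanti (x₁, (0:U)) (⁅x₂, x₃⁆, (0:U)), hanti (x₂, (0:U)) (⁅x₁, x₃⁆, (0:U)),
    hanti (x₃, (0:U)) (⁅x₁, x₂⁆, (0:U))] at h1
  simp only [Prod.fst_neg] at h1
  rw [h1]
  abel
end

section
/- Let g be a finite-dimensional real Lie algebra with Killing form ⟨·,·⟩ and let k ∈ ℝ. Then the graded vector space g_k := g ⊕ ℝ (with L₀ = g and L₁ = ℝ), together with the zero differential d = 0 : ℝ → g, the bracket given by the Lie bracket [x,y] of g on L₀×L₀ and by [x,v] := 0 for x ∈ g, v ∈ ℝ, and the Jacobiator J(x,y,z) := k·⟨x,[y,z]⟩, is a 2-term L∞-algebra over ℝ (the skeletal string 2-term L∞-algebra). -/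
open Function

/-- Example 2 of the paper: the skeletal string 2-term L∞-algebra
`g_k = g ⊕ ℝ`, for a finite-dimensional real Lie algebra `g` with Killing form `⟨·,·⟩`
and `c ∈ ℝ`: zero differential, bracket of `g` in degree 0, trivial bracket `L0 × L1 → L1`,
and Jacobiator `J(x,y,z) = c·⟨x,[y,z]⟩`. -/
theorem stmt13 (g : Type*) [LieRing g] [LieAlgebra ℝ g] [FiniteDimensional ℝ g]
    (c : ℝ) :
    IsTwoTerm ℝ g ℝ
      (fun _ : ℝ => (0 : g))
      (fun x y => ⁅x, y⁆)
      (fun _ _ => (0 : ℝ))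
      (fun x y z => c * killingForm ℝ g x ⁅y, z⁆) := by
  constructor
  · exact ⟨fun a b => by simp, fun a b => by simp⟩
  · exact fun y => ⟨fun a b => add_lie a b y, fun a b => smul_lie a b y⟩
  · exact fun x => ⟨fun a b => lie_add x a b, fun a b => lie_smul a x b⟩
  · exact fun x y => (lie_skew x y).symm
  · exact fun v => ⟨fun _ _ => by simp, fun _ _ => by simp⟩
  · exact fun x => ⟨fun _ _ => by simp, fun _ _ => by simp⟩
  · exact fun y z => ⟨fun a b => by simp [mul_add]; try ring, fun a b => by simp; try ring⟩
  · exact fun x z => ⟨fun a b => by simp [mul_add]; try ring, fun a b => by simp; try ring⟩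
  · exact fun x y => ⟨fun a b => by simp [mul_add]; try ring, fun a b => by simp; try ring⟩
  · intro x z
    rw [← LieModule.traceForm_apply_lie_apply ℝ g g x x z]
    simp
  · intro x y; simp
  · intro x v; simp
  · intro u v; simp
  · intro x y z
    have : ⁅x, ⁅y, z⁆⁆ - ⁅⁅x, y⁆, z⁆ - ⁅y, ⁅x, z⁆⁆ = 0 := by
      rw [leibniz_lie x y z]; abel
    simp [this]
  · intro v y z; simp
  · intro x₁ x₂ x₃ x₄
    simp only [zero_sub, neg_eq_zero]
    have h : ∀ a b w : g, killingForm ℝ g ⁅a, b⁆ w = killingForm ℝ g a ⁅b, w⁆ :=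
      fun a b w => LieModule.traceForm_apply_lie_apply ℝ g g a b w
    have hs : ∀ a b : g, killingForm ℝ g a b = killingForm ℝ g b a :=
      fun a b => LieModule.traceForm_comm ℝ g g a b
    have hD := hs ⁅x₂, x₃⁆ ⁅x₁, x₄⁆
    have hE := hs ⁅x₂, x₄⁆ ⁅x₁, x₃⁆
    have hF := hs ⁅x₃, x₄⁆ ⁅x₁, x₂⁆
    have key : ⁅x₂, ⁅x₃, x₄⁆⁆ - ⁅x₃, ⁅x₂, x₄⁆⁆ + ⁅x₄, ⁅x₂, x₃⁆⁆ = 0 := by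
      rw [leibniz_lie x₂ x₃ x₄, ← lie_skew ⁅x₂, x₃⁆ x₄]; abel
    have e1 : killingForm ℝ g ⁅x₁, x₂⁆ ⁅x₃, x₄⁆ - killingForm ℝ g ⁅x₁, x₃⁆ ⁅x₂, x₄⁆
        + killingForm ℝ g ⁅x₁, x₄⁆ ⁅x₂, x₃⁆ = 0 := by
      rw [h x₁ x₂ ⁅x₃, x₄⁆, h x₁ x₃ ⁅x₂, x₄⁆, h x₁ x₄ ⁅x₂, x₃⁆,
        ← map_sub (killingForm ℝ g x₁), ← map_add (killingForm ℝ g x₁), key]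
      simp
    rw [hD, hE, hF]
    linear_combination (-2) * c * e1
end

section
/- Let ℍ be the algebra of quaternions and for z ∈ ℍ write Re(z) for its real part (viewed as a quaternion) and Im(z) := z − Re(z) for its imaginary part. Fix v ∈ ℍ. Then the graded real vector space ℍ ⊕ ℍ (with L₀ = ℍ and L₁ = ℍ), together with the differential d := Re : ℍ → ℍ, the bracket given on L₀×L₀ by [a,c] := Im(Im(a)Im(c)) and on L₀×L₁ by [a,b] := Im(Im(a)Im(b)), and the alternating trilinear Jacobiator J : ℍ×ℍ×ℍ → ℍ determined on the basis 1, i, j, k by J(1,i,j) = J(1,i,k) = J(1,j,k) = 0 and J(i,j,k) = Im(v), is a 2-term L∞-algebra over ℝ. -/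
/-!
On imaginary quaternions `Im(a c)` is the cross product, i.e. half the ring commutator of `ℍ`;
hence the bracket is bilinear, antisymmetric and satisfies the Jacobi identity, `Re` kills every
bracket, and real quaternions, being central, bracket to zero. An alternating trilinear `J`
vanishing on `(1, i, j)`, `(1, i, k)`, `(1, j, k)` is forced to be
`J(x, y, z) = det(Im x, Im y, Im z) • Im v`, so identities (iii) and (iv) hold because both sides
vanish. In identity (v) the bracket terms cancel by the relation
`∑ᵢ (-1)ⁱ det(x₁, …, x̂ᵢ, …, x₄) xᵢ = 0` among four vectors of `ℝ³`, and the Jacobiator terms by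
the Binet–Cauchy identity `(a × b) · (c × d) = (a · c)(b · d) - (a · d)(b · c)`.
-/

open Function

/-- The real part of a quaternion, viewed as a quaternion. -/
noncomputable def qRe (z : Quaternion ℝ) : Quaternion ℝ := ((z.re : ℝ) : Quaternion ℝ)

/-- The imaginary part of a quaternion: `Im(z) := z - Re(z)`. -/
noncomputable def qIm (z : Quaternion ℝ) : Quaternion ℝ := z - qRe z

/-- The bracket `[a,c] := Im(Im(a)·Im(c))` of the quaternionic 2-term L∞-algebra. -/
noncomputable def qBr (a c : Quaternion ℝ) : Quaternion ℝ := qIm (qIm a * qIm c)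

/-- The imaginary units of `ℍ`. -/
noncomputable def qI : Quaternion ℝ := ⟨0, 1, 0, 0⟩
noncomputable def qJ : Quaternion ℝ := ⟨0, 0, 1, 0⟩
noncomputable def qK : Quaternion ℝ := ⟨0, 0, 0, 1⟩

open Quaternion

lemma qIm_eq_im (z : ℍ[ℝ]) : qIm z = z.im := sub_re_self z

lemma qBr_im_left (a c : ℍ[ℝ]) : qBr a.im c = qBr a c := by
  simp [qBr, qIm_eq_im]

lemma qBr_zero_left (c : ℍ[ℝ]) : qBr 0 c = 0 := by
  simp [qBr, qIm_eq_im]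

lemma qBr_qRe_left (u a : ℍ[ℝ]) : qBr (qRe u) a = 0 := by
  simp [qBr, qRe, qIm_eq_im, im_coe]

lemma qBr_qRe_right (a u : ℍ[ℝ]) : qBr a (qRe u) = 0 := by
  simp [qBr, qRe, qIm_eq_im, im_coe]

lemma qRe_qBr (a c : ℍ[ℝ]) : qRe (qBr a c) = 0 := by
  simp [qRe, qBr, qIm_eq_im]

section Commutator

attribute [local instance] LieRing.ofAssociativeRing

lemma qBr_eq_half_lie (a c : ℍ[ℝ]) : qBr a c = (2 : ℝ)⁻¹ • ⁅a, c⁆ := by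
  ext <;> simp [qBr, qIm_eq_im, Ring.lie_def] <;> ring

lemma qBr_add_left (a b c : ℍ[ℝ]) : qBr (a + b) c = qBr a c + qBr b c := by
  simp only [qBr_eq_half_lie, add_lie, smul_add]

lemma qBr_add_right (a b c : ℍ[ℝ]) : qBr a (b + c) = qBr a b + qBr a c := by
  simp only [qBr_eq_half_lie, lie_add, smul_add]

lemma qBr_sub_left (a b c : ℍ[ℝ]) : qBr (a - b) c = qBr a c - qBr b c := by
  simp only [qBr_eq_half_lie, sub_lie, smul_sub]

lemma qBr_smul_left (r : ℝ) (a c : ℍ[ℝ]) : qBr (r • a) c = r • qBr a c := by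
  simp only [qBr_eq_half_lie, smul_lie, smul_comm r]

lemma qBr_smul_right (r : ℝ) (a c : ℍ[ℝ]) : qBr a (r • c) = r • qBr a c := by
  simp only [qBr_eq_half_lie, lie_smul, smul_comm r]

lemma qBr_antisymm (a c : ℍ[ℝ]) : qBr a c = -qBr c a := by
  rw [qBr_eq_half_lie, qBr_eq_half_lie, ← lie_skew, smul_neg]

lemma qBr_leibniz (x y z : ℍ[ℝ]) : qBr x (qBr y z) = qBr (qBr x y) z + qBr y (qBr x z) := by
  simp only [qBr_eq_half_lie, lie_smul, smul_lie]
  rw [leibniz_lie, smul_add, smul_add]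

end Commutator

def imTriple (x y z : ℍ[ℝ]) : ℝ :=
  !![x.imI, x.imJ, x.imK; y.imI, y.imJ, y.imK; z.imI, z.imJ, z.imK].det

lemma imTriple_self_left (x z : ℍ[ℝ]) : imTriple x x z = 0 := by
  simp [imTriple, Matrix.det_fin_three]
  ring

lemma imTriple_self_right (x y : ℍ[ℝ]) : imTriple x y y = 0 := by
  simp [imTriple, Matrix.det_fin_three]
  ring

lemma imTriple_qRe_left (u y z : ℍ[ℝ]) : imTriple (qRe u) y z = 0 := by
  simp [imTriple, Matrix.det_fin_three, qRe, imI_coe, imJ_coe, imK_coe]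

lemma im_imTriple_smul_alternating_sum (x₁ x₂ x₃ x₄ : ℍ[ℝ]) :
    (imTriple x₂ x₃ x₄ • x₁ - imTriple x₁ x₃ x₄ • x₂ + imTriple x₁ x₂ x₄ • x₃
      - imTriple x₁ x₂ x₃ • x₄).im = 0 := by
  ext <;> simp [imTriple, Matrix.det_fin_three] <;> ring

lemma imTriple_qBr_alternating_sum (x₁ x₂ x₃ x₄ : ℍ[ℝ]) :
    imTriple (qBr x₁ x₂) x₃ x₄ - imTriple (qBr x₁ x₃) x₂ x₄ + imTriple (qBr x₁ x₄) x₂ x₃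
      + imTriple (qBr x₂ x₃) x₁ x₄ - imTriple (qBr x₂ x₄) x₁ x₃
      + imTriple (qBr x₃ x₄) x₁ x₂ = 0 := by
  simp [imTriple, Matrix.det_fin_three, qBr, qIm_eq_im]
  ring

lemma eq_imTriple_smul_of_alternating {M : Type*} [AddCommGroup M] [Module ℝ M]
    {J : ℍ[ℝ] → ℍ[ℝ] → ℍ[ℝ] → M}
    (h₁ : ∀ y z, IsLinearMap ℝ fun x => J x y z)
    (h₂ : ∀ x z, IsLinearMap ℝ fun y => J x y z)
    (h₃ : ∀ x y, IsLinearMap ℝ fun z => J x y z)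
    (hxx : ∀ x z, J x x z = 0) (hyy : ∀ x y, J x y y = 0)
    (h1ij : J 1 qI qJ = 0) (h1ik : J 1 qI qK = 0) (h1jk : J 1 qJ qK = 0) (x y z : ℍ[ℝ]) :
    J x y z = imTriple x y z • J qI qJ qK := by
  have swap₁₂ : ∀ a b c, J b a c = -J a b c := fun a b c => by
    have h := hxx (a + b) c
    rw [(h₁ _ _).map_add, (h₂ _ _).map_add, (h₂ _ _).map_add, hxx, hxx, zero_add, add_zero] at h
    exact eq_neg_of_add_eq_zero_right h
  have swap₂₃ : ∀ a b c, J a c b = -J a b c := fun a b c => by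
    have h := hyy a (b + c)
    rw [(h₂ _ _).map_add, (h₃ _ _).map_add, (h₃ _ _).map_add, hyy, hyy, zero_add, add_zero] at h
    exact eq_neg_of_add_eq_zero_right h
  have expand (a : ℍ[ℝ]) : a = a.re • 1 + a.imI • qI + a.imJ • qJ + a.imK • qK := by
    ext <;> simp <;> simp [qI, qJ, qK]
  -- oriented as below, the swaps sort basis arguments into the order `1, i, j, k`
  conv_lhs => rw [expand x, expand y, expand z]
  simp only [(h₁ _ _).map_add, (h₁ _ _).map_smul, (h₂ _ _).map_add, (h₂ _ _).map_smul,
    (h₃ _ _).map_add, (h₃ _ _).map_smul, swap₁₂ 1 qI, swap₁₂ 1 qJ, swap₁₂ 1 qK,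
    swap₁₂ qI qJ, swap₁₂ qI qK, swap₁₂ qJ qK, swap₂₃ _ 1 qI, swap₂₃ _ 1 qJ, swap₂₃ _ 1 qK,
    swap₂₃ _ qI qJ, swap₂₃ _ qI qK, swap₂₃ _ qJ qK, hxx, hyy, h1ij, h1ik, h1jk,
    neg_zero, smul_zero, smul_neg, add_zero, zero_add]
  simp [imTriple, Matrix.det_fin_three]
  module

def imJacobiator (w x y z : ℍ[ℝ]) : ℍ[ℝ] := imTriple x y z • w

lemma imJacobiator_coherence (w x₁ x₂ x₃ x₄ : ℍ[ℝ]) :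
    qBr x₁ (imJacobiator w x₂ x₃ x₄) - qBr x₂ (imJacobiator w x₁ x₃ x₄)
      + qBr x₃ (imJacobiator w x₁ x₂ x₄) - qBr x₄ (imJacobiator w x₁ x₂ x₃)
      - (imJacobiator w (qBr x₁ x₂) x₃ x₄ - imJacobiator w (qBr x₁ x₃) x₂ x₄
        + imJacobiator w (qBr x₁ x₄) x₂ x₃ + imJacobiator w (qBr x₂ x₃) x₁ x₄
        - imJacobiator w (qBr x₂ x₄) x₁ x₃ + imJacobiator w (qBr x₃ x₄) x₁ x₂) = 0 := by
  have hcramer := congrArg (qBr · w) (im_imTriple_smul_alternating_sum x₁ x₂ x₃ x₄)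
  simp only [qBr_im_left, qBr_add_left, qBr_sub_left, qBr_smul_left,
    qBr_zero_left] at hcramer
  simp only [imJacobiator, qBr_smul_right]
  linear_combination (norm := module)
    hcramer - imTriple_qBr_alternating_sum x₁ x₂ x₃ x₄ • w

theorem isTwoTerm_imJacobiator {w : ℍ[ℝ]} (hw : w.re = 0) :
    IsTwoTerm ℝ ℍ[ℝ] ℍ[ℝ] qRe qBr qBr (imJacobiator w) where
  d_lin := ⟨fun a b => by simp [qRe], fun r a => by simp [qRe, smul_coe]⟩
  b0_lin_left c := ⟨(qBr_add_left · · c), (qBr_smul_left · · c)⟩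
  b0_lin_right a := ⟨qBr_add_right a, (qBr_smul_right · a)⟩
  b0_antisymm := qBr_antisymm
  b1_lin_left c := ⟨(qBr_add_left · · c), (qBr_smul_left · · c)⟩
  b1_lin_right a := ⟨qBr_add_right a, (qBr_smul_right · a)⟩
  J_lin₁ y z := ⟨fun a b => by simp [imJacobiator, imTriple, Matrix.det_fin_three]; module,
    fun r a => by simp [imJacobiator, imTriple, Matrix.det_fin_three]; module⟩
  J_lin₂ x z := ⟨fun a b => by simp [imJacobiator, imTriple, Matrix.det_fin_three]; module,
    fun r a => by simp [imJacobiator, imTriple, Matrix.det_fin_three]; module⟩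
  J_lin₃ x y := ⟨fun a b => by simp [imJacobiator, imTriple, Matrix.det_fin_three]; module,
    fun r a => by simp [imJacobiator, imTriple, Matrix.det_fin_three]; module⟩
  J_alt₁ x z := by rw [imJacobiator, imTriple_self_left, zero_smul]
  J_alt₂ x y := by rw [imJacobiator, imTriple_self_right, zero_smul]
  ident₁ x v := by rw [qRe_qBr, qBr_qRe_right]
  ident₂ u v := by rw [qBr_qRe_left, qBr_qRe_left, neg_zero]
  ident₃ x y z := by
    rw [qBr_leibniz x y z]
    simp [imJacobiator, qRe, hw]
  ident₄ v y z := by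
    rw [qBr_leibniz y z v, imJacobiator, imTriple_qRe_left, zero_smul]
    abel
  ident₅ := imJacobiator_coherence w

/-- Example 1 of the paper: the quaternionic 2-term L∞-algebra
`ℍ ⊕ ℍ`, with `d = Re`, brackets `[a,c] = Im(Im(a)·Im(c))` (in both degrees), and the
alternating trilinear Jacobiator `J` determined on the standard basis `1, i, j, k` by
`J(1,i,j) = J(1,i,k) = J(1,j,k) = 0` and `J(i,j,k) = Im(v)` (for a fixed `v ∈ ℍ`), is a
2-term L∞-algebra over `ℝ`. -/
theorem stmt14 (v : Quaternion ℝ)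
    (J : Quaternion ℝ → Quaternion ℝ → Quaternion ℝ → Quaternion ℝ)
    (hJ_lin₁ : ∀ y z, IsLinearMap ℝ fun x => J x y z)
    (hJ_lin₂ : ∀ x z, IsLinearMap ℝ fun y => J x y z)
    (hJ_lin₃ : ∀ x y, IsLinearMap ℝ fun z => J x y z)
    (hJ_alt₁ : ∀ x z, J x x z = 0)
    (hJ_alt₂ : ∀ x y, J x y y = 0)
    (hJ1ij : J 1 qI qJ = 0)
    (hJ1ik : J 1 qI qK = 0)
    (hJ1jk : J 1 qJ qK = 0)
    (hJijk : J qI qJ qK = qIm v) :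
    IsTwoTerm ℝ (Quaternion ℝ) (Quaternion ℝ) qRe qBr qBr J := by
  have hJ : J = imJacobiator (qIm v) := by
    funext x y z
    rw [eq_imTriple_smul_of_alternating hJ_lin₁ hJ_lin₂ hJ_lin₃ hJ_alt₁ hJ_alt₂ hJ1ij hJ1ik
      hJ1jk, hJijk, imJacobiator]
  rw [hJ]
  exact isTwoTerm_imJacobiator (by rw [qIm_eq_im, re_im])
end

section
/- Let ℍ be the algebra of quaternions, fix v ∈ ℍ, and let (ℍ⊕ℍ, d, [·,·], J) be the quaternionic 2-term L∞-algebra with d = Re, brackets [a,c] = Im(Im(a)Im(c)) (on both L₀×L₀ and L₀×L₁), and J determined by J(1,i,j) = J(1,i,k) = J(1,j,k) = 0, J(i,j,k) = Im(v). Define φ : ℍ → ℍ (used in both degrees) as the real-linear map determined by φ(1) = 1, φ(i) = j, φ(j) = k, φ(k) = i, and define Φ : ℍ ∧ ℍ → ℍ as the real-linear alternating map determined by Φ(1∧i) = Φ(1∧j) = Φ(1∧k) = 0, Φ(i∧j) = Re(v(i−j))·k, Φ(j∧k) = Re(v(j−k))·i, Φ(k∧i) = Re(v(k−i))·j. Then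 (φ,Φ) is an isomorphism of 2-term L∞-algebras from (ℍ⊕ℍ, d, [·,·], J) to itself. -/
open Function

/-!
The map `φ` is the algebra automorphism of `ℍ` permuting `i ↦ j ↦ k ↦ i`. It preserves real
parts, so it commutes with `d = Re`, `Im` and the bracket; since `Φ` takes imaginary values and
vanishes as soon as one argument is real, the conditions on `d` and on the brackets hold. By
alternation, `J(x, y, z) = det(Im x, Im y, Im z) • Im v`, and `φ` preserves this determinant (it
permutes the imaginary coordinates evenly), so the Jacobiator condition is a polynomial identity
in the coordinates.
-/

open Quaternion

@[simp] theorem re_qI : qI.re = 0 := rfl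
@[simp] theorem imI_qI : qI.imI = 1 := rfl
@[simp] theorem imJ_qI : qI.imJ = 0 := rfl
@[simp] theorem imK_qI : qI.imK = 0 := rfl
@[simp] theorem re_qJ : qJ.re = 0 := rfl
@[simp] theorem imI_qJ : qJ.imI = 0 := rfl
@[simp] theorem imJ_qJ : qJ.imJ = 1 := rfl
@[simp] theorem imK_qJ : qJ.imK = 0 := rfl
@[simp] theorem re_qK : qK.re = 0 := rfl
@[simp] theorem imI_qK : qK.imI = 0 := rfl
@[simp] theorem imJ_qK : qK.imJ = 0 := rfl
@[simp] theorem imK_qK : qK.imK = 1 := rfl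

theorem quaternion_eq_coords (x : ℍ[ℝ]) :
    x = x.re • (1 : ℍ[ℝ]) + x.imI • qI + x.imJ • qJ + x.imK • qK := by
  ext <;> simp

theorem IsLinearMap.map_quaternion_eq {M : Type*} [AddCommGroup M] [Module ℝ M]
    {f : ℍ[ℝ] → M} (hf : IsLinearMap ℝ f) (x : ℍ[ℝ]) :
    f x = x.re • f 1 + x.imI • f qI + x.imJ • f qJ + x.imK • f qK := by
  conv_lhs => rw [quaternion_eq_coords x]
  simp only [hf.map_add, hf.map_smul]

def imDet (x y z : ℍ[ℝ]) : ℝ :=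
  !![x.imI, x.imJ, x.imK; y.imI, y.imJ, y.imK; z.imI, z.imJ, z.imK].det

section Alternating

variable {M : Type*} [AddCommGroup M] [Module ℝ M]

theorem eq_neg_swap_of_alt {B : ℍ[ℝ] → ℍ[ℝ] → M} (hl : ∀ y, IsLinearMap ℝ (B · y))
    (hr : ∀ x, IsLinearMap ℝ (B x)) (halt : ∀ x, B x x = 0) (x y : ℍ[ℝ]) :
    B y x = -B x y := by
  have h := halt (x + y)
  rw [(hl _).map_add, (hr x).map_add, (hr y).map_add, halt x, halt y, zero_add, add_zero] at h
  exact eq_neg_of_add_eq_zero_right h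

theorem alt_bilinear_quaternion_eq {B : ℍ[ℝ] → ℍ[ℝ] → M} (hl : ∀ y, IsLinearMap ℝ (B · y))
    (hr : ∀ x, IsLinearMap ℝ (B x)) (halt : ∀ x, B x x = 0) (x y : ℍ[ℝ]) :
    B x y = (x.re * y.imI - x.imI * y.re) • B 1 qI + (x.re * y.imJ - x.imJ * y.re) • B 1 qJ
      + (x.re * y.imK - x.imK * y.re) • B 1 qK + (x.imI * y.imJ - x.imJ * y.imI) • B qI qJ
      + (x.imJ * y.imK - x.imK * y.imJ) • B qJ qK
      + (x.imK * y.imI - x.imI * y.imK) • B qK qI := by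
  have swap := eq_neg_swap_of_alt hl hr halt
  rw [(hl y).map_quaternion_eq x, (hr 1).map_quaternion_eq y, (hr qI).map_quaternion_eq y,
    (hr qJ).map_quaternion_eq y, (hr qK).map_quaternion_eq y]
  simp only [halt, swap 1 qI, swap 1 qJ, swap 1 qK, swap qI qJ, swap qJ qK, swap qK qI]
  module

theorem alt_trilinear_quaternion_eq {J : ℍ[ℝ] → ℍ[ℝ] → ℍ[ℝ] → M}
    (h₁ : ∀ y z, IsLinearMap ℝ fun x => J x y z) (h₂ : ∀ x z, IsLinearMap ℝ fun y => J x y z)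
    (h₃ : ∀ x y, IsLinearMap ℝ fun z => J x y z) (halt₁ : ∀ x z, J x x z = 0)
    (halt₂ : ∀ x y, J x y y = 0) (h1ij : J 1 qI qJ = 0) (h1ik : J 1 qI qK = 0)
    (h1jk : J 1 qJ qK = 0) (x y z : ℍ[ℝ]) :
    J x y z = imDet x y z • J qI qJ qK := by
  have swap₁₂ (x y z) : J y x z = -J x y z :=
    eq_neg_swap_of_alt (B := (J · · z)) (fun y => h₁ y z) (fun x => h₂ x z) (halt₁ · z) x y
  have swap₂₃ (x y z) : J x z y = -J x y z :=
    eq_neg_swap_of_alt (h₂ x) (h₃ x) (halt₂ x) y z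
  have one_left (y z) : J 1 y z = 0 := by
    rw [alt_bilinear_quaternion_eq (h₂ 1) (h₃ 1) (halt₂ 1), halt₁, halt₁, halt₁, h1ij, h1jk,
      swap₂₃ 1 qI qK, h1ik]
    simp
  have one_mid (x z) : J x 1 z = 0 := by rw [swap₁₂ 1 x z, one_left, neg_zero]
  have cyclic (x y z) : J y z x = J x y z := by rw [swap₂₃ y x z, swap₁₂ x y z, neg_neg]
  have self_right (x y) : J x y x = 0 := by rw [cyclic x x y, halt₁]
  have hij (x) : J x qI qJ = x.imK • J qI qJ qK := by
    rw [(h₁ qI qJ).map_quaternion_eq, one_left, halt₁, self_right, cyclic qJ qK qI,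
      cyclic qI qJ qK]
    simp
  have hjk (x) : J x qJ qK = x.imI • J qI qJ qK := by
    rw [(h₁ qJ qK).map_quaternion_eq, one_left, halt₁, self_right]
    simp
  have hki (x) : J x qK qI = x.imJ • J qI qJ qK := by
    rw [(h₁ qK qI).map_quaternion_eq, one_left, halt₁, self_right, cyclic qI qJ qK]
    simp
  rw [alt_bilinear_quaternion_eq (h₂ x) (h₃ x) (halt₂ x), one_mid, one_mid, one_mid, hij x,
    hjk x, hki x, imDet, Matrix.det_fin_three]
  simp only [Matrix.of_apply, Matrix.cons_val', Matrix.cons_val_zero, Matrix.cons_val_fin_one,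
    Matrix.cons_val_one, Matrix.cons_val]
  module

end Alternating

section AlgHom

variable {F : Type*} [FunLike F ℍ[ℝ] ℍ[ℝ]] [AlgHomClass F ℝ ℍ[ℝ] ℍ[ℝ]] {f : F}

theorem map_qRe (hf : ∀ z, (f z).re = z.re) (z : ℍ[ℝ]) : f (qRe z) = qRe (f z) := by
  rw [qRe, qRe, hf, ← Quaternion.algebraMap_def, AlgHomClass.commutes]

theorem map_qIm (hf : ∀ z, (f z).re = z.re) (z : ℍ[ℝ]) : f (qIm z) = qIm (f z) := by
  rw [qIm, qIm, map_sub, map_qRe hf]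

theorem map_qBr (hf : ∀ z, (f z).re = z.re) (x y : ℍ[ℝ]) : f (qBr x y) = qBr (f x) (f y) := by
  rw [qBr, qBr, map_qIm hf, map_mul, map_qIm hf, map_qIm hf]

end AlgHom

def cycleIJKFun (x : ℍ[ℝ]) : ℍ[ℝ] := ⟨x.re, x.imK, x.imI, x.imJ⟩

@[simp] theorem re_cycleIJKFun (x : ℍ[ℝ]) : (cycleIJKFun x).re = x.re := rfl
@[simp] theorem imI_cycleIJKFun (x : ℍ[ℝ]) : (cycleIJKFun x).imI = x.imK := rfl
@[simp] theorem imJ_cycleIJKFun (x : ℍ[ℝ]) : (cycleIJKFun x).imJ = x.imI := rfl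
@[simp] theorem imK_cycleIJKFun (x : ℍ[ℝ]) : (cycleIJKFun x).imK = x.imJ := rfl

def cycleIJK : ℍ[ℝ] ≃ₐ[ℝ] ℍ[ℝ] where
  toFun := cycleIJKFun
  invFun := cycleIJKFun ∘ cycleIJKFun
  left_inv _ := rfl
  right_inv _ := rfl
  map_mul' x y := by ext <;> simp [re_mul, imI_mul, imJ_mul, imK_mul] <;> ring
  map_add' x y := by ext <;> simp
  commutes' r := by ext <;> simp

@[simp] theorem cycleIJK_apply (x : ℍ[ℝ]) : cycleIJK x = cycleIJKFun x := rfl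

theorem re_cycleIJK (x : ℍ[ℝ]) : (cycleIJK x).re = x.re := rfl

theorem imDet_cycleIJK (x y z : ℍ[ℝ]) :
    imDet (cycleIJK x) (cycleIJK y) (cycleIJK z) = imDet x y z := by
  simp only [imDet, Matrix.det_fin_three, Matrix.of_apply, Matrix.cons_val', Matrix.cons_val_zero,
    Matrix.cons_val_fin_one, Matrix.cons_val_one, Matrix.cons_val, cycleIJK_apply,
    imI_cycleIJKFun, imJ_cycleIJKFun, imK_cycleIJKFun]
  ring

theorem eq_cycleIJK {φ : ℍ[ℝ] → ℍ[ℝ]} (hφ : IsLinearMap ℝ φ) (h1 : φ 1 = 1) (hi : φ qI = qJ)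
    (hj : φ qJ = qK) (hk : φ qK = qI) : φ = cycleIJK := by
  funext x
  rw [hφ.map_quaternion_eq, h1, hi, hj, hk]
  ext <;> simp

/-- Example 5 of the paper: on the quaternionic 2-term L∞-algebra
`ℍ ⊕ ℍ` (with `d = Re`, brackets `[a,c] = Im(Im(a)·Im(c))` in both degrees, and `J`
the alternating trilinear map with `J(1,i,j) = J(1,i,k) = J(1,j,k) = 0`,
`J(i,j,k) = Im(v)`), the pair `(φ, Φ)`, where `φ` is the real-linear map (used in both
degrees) with `φ(1) = 1, φ(i) = j, φ(j) = k, φ(k) = i`, and `Φ` is the antisymmetric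
bilinear map with `Φ(1,i) = Φ(1,j) = Φ(1,k) = 0`, `Φ(i,j) = Re(v(i−j))·k`,
`Φ(j,k) = Re(v(j−k))·i`, `Φ(k,i) = Re(v(k−i))·j`, is an isomorphism of 2-term
L∞-algebras from `ℍ ⊕ ℍ` to itself. -/
theorem stmt15 (v : Quaternion ℝ)
    (J : Quaternion ℝ → Quaternion ℝ → Quaternion ℝ → Quaternion ℝ)
    (hJ_lin₁ : ∀ y z, IsLinearMap ℝ fun x => J x y z)
    (hJ_lin₂ : ∀ x z, IsLinearMap ℝ fun y => J x y z)
    (hJ_lin₃ : ∀ x y, IsLinearMap ℝ fun z => J x y z)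
    (hJ_alt₁ : ∀ x z, J x x z = 0)
    (hJ_alt₂ : ∀ x y, J x y y = 0)
    (hJ1ij : J 1 qI qJ = 0)
    (hJ1ik : J 1 qI qK = 0)
    (hJ1jk : J 1 qJ qK = 0)
    (hJijk : J qI qJ qK = qIm v)
    (φ : Quaternion ℝ → Quaternion ℝ)
    (hφ_lin : IsLinearMap ℝ φ)
    (hφ1 : φ 1 = 1)
    (hφi : φ qI = qJ)
    (hφj : φ qJ = qK)
    (hφk : φ qK = qI)
    (Φ : Quaternion ℝ → Quaternion ℝ → Quaternion ℝ)
    (hΦ_lin_left : ∀ y, IsLinearMap ℝ fun x => Φ x y)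
    (hΦ_lin_right : ∀ x, IsLinearMap ℝ fun y => Φ x y)
    (hΦ_alt : ∀ x, Φ x x = 0)
    (hΦ1i : Φ 1 qI = 0)
    (hΦ1j : Φ 1 qJ = 0)
    (hΦ1k : Φ 1 qK = 0)
    (hΦij : Φ qI qJ = ((v * (qI - qJ)).re : ℝ) • qK)
    (hΦjk : Φ qJ qK = ((v * (qJ - qK)).re : ℝ) • qI)
    (hΦki : Φ qK qI = ((v * (qK - qI)).re : ℝ) • qJ) :
    IsMorphism ℝ (Quaternion ℝ) (Quaternion ℝ) (Quaternion ℝ) (Quaternion ℝ)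
      qRe qBr qBr J qRe qBr qBr J φ φ Φ ∧
    Function.Bijective φ := by
  have hJ (x y z) : J x y z = imDet x y z • qIm v := by
    rw [alt_trilinear_quaternion_eq hJ_lin₁ hJ_lin₂ hJ_lin₃ hJ_alt₁ hJ_alt₂ hJ1ij hJ1ik hJ1jk,
      hJijk]
  have hΦ (x y) : Φ x y = ((x.imJ * y.imK - x.imK * y.imJ) * (v * (qJ - qK)).re) • qI
      + ((x.imK * y.imI - x.imI * y.imK) * (v * (qK - qI)).re) • qJ
      + ((x.imI * y.imJ - x.imJ * y.imI) * (v * (qI - qJ)).re) • qK := by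
    rw [alt_bilinear_quaternion_eq hΦ_lin_left hΦ_lin_right hΦ_alt, hΦ1i, hΦ1j, hΦ1k, hΦij, hΦjk,
      hΦki]
    module
  obtain rfl := eq_cycleIJK hφ_lin hφ1 hφi hφj hφk
  refine ⟨⟨hφ_lin, hφ_lin, hΦ_lin_left, hΦ_lin_right, hΦ_alt, map_qRe re_cycleIJK, ?_, ?_, ?_⟩,
    cycleIJK.bijective⟩
  · intro x y
    rw [map_qBr re_cycleIJK, sub_self, hΦ]
    ext <;> simp [qRe]
  · intro u y
    rw [map_qBr re_cycleIJK, neg_add_cancel, hΦ]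
    simp [qRe]
  · intro x y z
    simp only [hJ, imDet_cycleIJK, hΦ]
    ext <;> simp [qBr, qIm, qRe, re_mul, imI_mul, imJ_mul, imK_mul, imDet,
      Matrix.det_fin_three] <;> ring
end
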